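/- arXiv:2407.13964 — 3 statements merged into one kernel-verified Lean document; each statement's English description precedes it below -/
import Mathlib

section
/- Fix a threshold l ∈ (0,1) and let μ₁ be a probability measure on [0,1] with barycenter μ̄₁ < l whose greedy measure is nonzero, with greedy mass α := g(μ₁) > 0. Then for every β ∈ (0, α] there exists an interval measure ν for μ₁ with total mass |ν| = β, and it is unique: any two interval measures for μ₁ of total mass β are equal as measures. -/
open MeasureTheory Set
open scoped ENNReal unitInterval Classical

noncomputable section

namespace Persuasion

/-- Total mass of a measure on the unit interval. -/
def tmass (μ : Measure I) : ℝ := (μ univ).toReal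

/-- Integral of the identity. -/
def intg (μ : Measure I) : ℝ := ∫ x, (x : ℝ) ∂μ

/-- Barycenter. -/
def bary (μ : Measure I) : ℝ := intg μ / tmass μ

/-- Blackwell order: `BLE μ ν` means `μ ⪯_B ν`. -/
def BLE (μ ν : Measure I) : Prop :=
  ∀ f : ℝ → ℝ, ContinuousOn f (Icc (0:ℝ) 1) → ConcaveOn ℝ (Icc (0:ℝ) 1) f →
    (∫ x, f (x : ℝ) ∂ν) / tmass ν ≤ (∫ x, f (x : ℝ) ∂μ) / tmass μ

/-- First order stochastic dominance `λ ⪯_F μ`. -/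
def FLE (lam mu : Measure I) : Prop :=
  ∀ x : ℝ, lam {y : I | x ≤ (y : ℝ)} ≤ mu {y : I | x ≤ (y : ℝ)}

/-- A probability kernel with the martingale (barycenter) property. -/
structure ProbKernel where
  k : I → Measure I
  meas : Measurable k
  prob : ∀ x, IsProbabilityMeasure (k x)
  bary_eq : ∀ x : I, ∫ y, (y : ℝ) ∂(k x) = (x : ℝ)

/-- Pushforward of a measure through a kernel. -/
def push (K : ProbKernel) (μ : Measure I) : Measure I := μ.bind K.k

/-- Blackwell order preserving kernels. -/
def BlackwellPreserving (K : ProbKernel) : Prop :=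
  ∀ μ ν : Measure I, IsProbabilityMeasure μ → IsProbabilityMeasure ν →
    bary μ = bary ν → BLE μ ν → BLE (push K μ) (push K ν)

/-- FOSD kernel. -/
structure FOSDKernel where
  k : I → Measure I
  meas : Measurable k
  prob : ∀ x, IsProbabilityMeasure (k x)
  up : ∀ x : I, k x {y : I | (x : ℝ) ≤ (y : ℝ)} = 1

/-- Domination order `λ ⪯_D μ`. -/
def DomLE (lam mu : Measure I) : Prop :=
  ∃ (φ : FOSDKernel) (ρ : ProbKernel), ((lam.bind φ.k).bind ρ.k) ≤ mu

/-- Interval measure for `μ` with threshold `l`. -/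
def IsIntervalMeasure (l : ℝ) (μ ν : Measure I) : Prop :=
  ν ≤ μ ∧ bary ν = l ∧
    ∃ y₁ y₂ : ℝ, 0 ≤ y₁ ∧ y₁ ≤ y₂ ∧ y₂ ≤ 1 ∧
      ν.restrict {x : I | y₁ < (x : ℝ) ∧ (x : ℝ) < y₂} =
        μ.restrict {x : I | y₁ < (x : ℝ) ∧ (x : ℝ) < y₂} ∧
      ν {x : I | (x : ℝ) < y₁ ∨ y₂ < (x : ℝ)} = 0

/-- Greedy measure predicate. -/
def IsGreedy (l : ℝ) (μ ν : Measure I) : Prop :=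
  ν ≤ μ ∧ bary ν = l ∧
    ∃ y : ℝ, 0 ≤ y ∧ y ≤ 1 ∧
      ν.restrict {x : I | y < (x : ℝ)} = μ.restrict {x : I | y < (x : ℝ)} ∧
      ν {x : I | (x : ℝ) < y} = 0

/-- The greedy measure (zero if none exists). -/
def greedy (l : ℝ) (μ : Measure I) : Measure I :=
  if h : ∃ ν, IsGreedy l μ ν then h.choose else 0

/-- Greedy mass. -/
def gmass (l : ℝ) (μ : Measure I) : ℝ := tmass (greedy l μ)

/-- Sequence of residual measures generated by a policy
(internal period `t : ℕ` corresponds to the paper's period `t+1`). -/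
def policySeq (σk : ℕ → ProbKernel) (μ₁ : Measure I) (ν : ℕ → Measure I) : ℕ → Measure I
  | 0 => μ₁
  | t + 1 => push (σk t) (policySeq σk μ₁ ν t - ν t)

/-- Feasibility of a policy for horizon `T`. -/
def Feasible (T : ℕ∞) (l : ℝ) (σk : ℕ → ProbKernel) (μ₁ : Measure I) (ν : ℕ → Measure I) : Prop :=
  (∀ t : ℕ, (t : ℕ∞) < T →
      ν t ≤ policySeq σk μ₁ ν t ∧ l * tmass (ν t) ≤ intg (ν t)) ∧
  (∀ t : ℕ, ¬ (t : ℕ∞) < T → ν t = 0)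

/-- Value of a policy (the weight `w t` is the paper's `w_{t+1}`). -/
def value (T : ℕ∞) (w : ℕ → ℝ) (ν : ℕ → Measure I) : ℝ≥0∞ :=
  ∑' t : ℕ, if (t : ℕ∞) < T then ENNReal.ofReal (w t) * (ν t univ) else 0

/-- The sender's value: supremum over feasible policies. -/
def senderValue (T : ℕ∞) (l : ℝ) (σk : ℕ → ProbKernel) (μ₁ : Measure I) (w : ℕ → ℝ) : ℝ≥0∞ :=
  ⨆ (ν : ℕ → Measure I) (_ : Feasible T l σk μ₁ ν), value T w ν

/-- Greedy state/action sequence with horizon `T`. -/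
def gSeq (T : ℕ∞) (l : ℝ) (σk : ℕ → ProbKernel) (μ₁ : Measure I) : ℕ → Measure I × Measure I
  | 0 => (μ₁, if ((0 : ℕ) : ℕ∞) < T then greedy l μ₁ else 0)
  | t + 1 =>
      (push (σk t) ((gSeq T l σk μ₁ t).1 - (gSeq T l σk μ₁ t).2),
        if ((t + 1 : ℕ) : ℕ∞) < T then
          greedy l (push (σk t) ((gSeq T l σk μ₁ t).1 - (gSeq T l σk μ₁ t).2)) else 0)

/-- The greedy policy. -/
def greedyPolicy (T : ℕ∞) (l : ℝ) (σk : ℕ → ProbKernel) (μ₁ : Measure I) (t : ℕ) : Measure I :=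
  (gSeq T l σk μ₁ t).2

/-- Grids: `Z = ℤ ∩ [a,b]` is captured by order-connectedness. -/
structure Grid where
  Z : Set ℤ
  ordConn : Z.OrdConnected
  z : ℤ → I
  mono : ∀ i j, i ∈ Z → j ∈ Z → i < j → (z i : ℝ) < (z j : ℝ)

/-- The random-walk kernel on a grid. -/
def IsRWKernel (G : Grid) (K : ProbKernel) : Prop :=
  ∀ j ∈ G.Z,
    ((j - 1 ∈ G.Z → j + 1 ∈ G.Z →
        K.k (G.z j) =
          ENNReal.ofReal (((G.z (j + 1) : ℝ) - (G.z j : ℝ)) /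
              ((G.z (j + 1) : ℝ) - (G.z (j - 1) : ℝ))) • Measure.dirac (G.z (j - 1)) +
          ENNReal.ofReal (((G.z j : ℝ) - (G.z (j - 1) : ℝ)) /
              ((G.z (j + 1) : ℝ) - (G.z (j - 1) : ℝ))) • Measure.dirac (G.z (j + 1)))) ∧
    ((j - 1 ∉ G.Z ∨ j + 1 ∉ G.Z) → K.k (G.z j) = Measure.dirac (G.z j))

/-- `D(Γ)` for threshold `l`. -/
def Dval (G : Grid) (l : ℝ) : ℝ :=
  sSup {d : ℝ | ∃ j : ℤ, j ≤ 0 ∧ j - 1 ∈ G.Z ∧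
    d = (l - (G.z (j - 1) : ℝ)) / (l - (G.z j : ℝ))}

/-- Endpoint index of a grid. -/
def IsEndpointIdx (G : Grid) (j : ℤ) : Prop := j ∈ G.Z ∧ (j - 1 ∉ G.Z ∨ j + 1 ∉ G.Z)

/-- The measure is supported on the grid. -/
def SuppOnGrid (G : Grid) (μ : Measure I) : Prop :=
  μ {x : I | ¬ ∃ j ∈ G.Z, x = G.z j} = 0

/-- `Δ*(Γ)`: supported on even- or on odd-indexed points (endpoints count as both). -/
def MemDeltaStar (G : Grid) (μ : Measure I) : Prop :=
  (μ {x : I | ¬ ∃ j ∈ G.Z, (Even j ∨ IsEndpointIdx G j) ∧ x = G.z j} = 0) ∨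
  (μ {x : I | ¬ ∃ j ∈ G.Z, (Odd j ∨ IsEndpointIdx G j) ∧ x = G.z j} = 0)


/-- strict upper set -/
def SU (t : ℝ) : Set I := {x : I | t < (x:ℝ)}
def SL (t : ℝ) : Set I := {x : I | (x:ℝ) < t}
def PT (t : ℝ) : Set I := {x : I | (x:ℝ) = t}

lemma measurable_SU (t : ℝ) : MeasurableSet (SU t) :=
  measurable_subtype_coe measurableSet_Ioi
lemma measurable_SL (t : ℝ) : MeasurableSet (SL t) :=
  measurable_subtype_coe measurableSet_Iio
lemma measurable_PT (t : ℝ) : MeasurableSet (PT t) :=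
  measurable_subtype_coe (measurableSet_singleton t)

def pI (t : ℝ) : I := Set.projIcc 0 1 zero_le_one t

lemma pI_coe {t : ℝ} (ht : t ∈ Icc (0:ℝ) 1) : ((pI t : I) : ℝ) = t := by
  simp [pI, Set.projIcc_of_mem zero_le_one ht]

lemma PT_eq_singleton {t : ℝ} (ht : t ∈ Icc (0:ℝ) 1) : PT t = {pI t} := by
  ext x
  simp only [PT, mem_setOf_eq, mem_singleton_iff]
  constructor
  · intro h; exact Subtype.ext (by rw [h, pI_coe ht])
  · intro h; rw [h, pI_coe ht]

def Ff (μ : Measure I) (t : ℝ) : ℝ≥0∞ := μ (SU t)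

lemma Ff_anti (μ : Measure I) {s t : ℝ} (h : s ≤ t) : Ff μ t ≤ Ff μ s :=
  measure_mono (fun x hx => lt_of_le_of_lt h hx)

def qS (μ : Measure I) (u : ℝ) : Set ℝ := {t | t ∈ Icc (0:ℝ) 1 ∧ Ff μ t ≤ ENNReal.ofReal u}

def qf (μ : Measure I) (u : ℝ) : ℝ := sInf (qS μ u)

lemma Ff_one (μ : Measure I) : Ff μ 1 = 0 := by
  have : SU 1 = ∅ := by
    ext x; simp only [SU, mem_setOf_eq, mem_empty_iff_false, iff_false, not_lt]
    exact x.2.2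
  simp [Ff, this]

lemma qS_nonempty (μ : Measure I) {u : ℝ} (hu : 0 ≤ u) : (qS μ u).Nonempty :=
  ⟨1, ⟨by norm_num, by simp [Ff_one]⟩⟩

lemma qS_bddBelow (μ : Measure I) (u : ℝ) : BddBelow (qS μ u) :=
  ⟨0, fun t ht => ht.1.1⟩

lemma qf_mem_Icc (μ : Measure I) {u : ℝ} (hu : 0 ≤ u) : qf μ u ∈ Icc (0:ℝ) 1 :=
  ⟨le_csInf (qS_nonempty μ hu) (fun t ht => ht.1.1),
   csInf_le_of_le (qS_bddBelow μ u) (show (1:ℝ) ∈ qS μ u from ⟨by norm_num, by simp [Ff_one]⟩) le_rfl⟩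

lemma Ff_le_of_gt_qf (μ : Measure I) {u s : ℝ} (hu : 0 ≤ u) (hs : qf μ u < s) :
    Ff μ s ≤ ENNReal.ofReal u := by
  obtain ⟨t, ht, hts⟩ := (csInf_lt_iff (qS_bddBelow μ u) (qS_nonempty μ hu)).mp hs
  exact le_trans (Ff_anti μ hts.le) ht.2

/-- right continuity: F(qf u) ≤ u -/
lemma Ff_qf_le (μ : Measure I) {u : ℝ} (hu : 0 ≤ u) : Ff μ (qf μ u) ≤ ENNReal.ofReal u := by
  set q := qf μ u
  have hU : SU q = ⋃ n : ℕ, SU (q + 1/(n+1)) := by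
    ext x
    simp only [SU, mem_setOf_eq, mem_iUnion]
    constructor
    · intro h
      obtain ⟨n, hn⟩ := exists_nat_one_div_lt (sub_pos.mpr h)
      exact ⟨n, by push_cast at hn ⊢; linarith⟩
    · rintro ⟨n, hn⟩
      have : (0:ℝ) < 1/(n+1) := by positivity
      linarith
  have hmono : Monotone (fun n : ℕ => SU (q + 1/(n+1))) := by
    intro m n hmn x hx
    have hc : (m:ℝ) ≤ n := Nat.cast_le.mpr hmn
    have : (1:ℝ)/(n+1) ≤ 1/(m+1) := by
      apply one_div_le_one_div_of_le (by positivity)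
      linarith
    simp only [SU, mem_setOf_eq] at hx ⊢
    linarith
  calc Ff μ q = ⨆ n : ℕ, μ (SU (q + 1/(n+1))) := by rw [Ff, hU, hmono.measure_iUnion]
    _ ≤ ENNReal.ofReal u := by
        apply iSup_le; intro n
        exact Ff_le_of_gt_qf μ hu (by linarith [show (0:ℝ) < 1/(n+1) by positivity])


def CU (t : ℝ) : Set I := {x : I | t ≤ (x:ℝ)}

lemma measurable_CU (t : ℝ) : MeasurableSet (CU t) :=
  measurable_subtype_coe measurableSet_Ici

lemma CU_eq_union (t : ℝ) : CU t = PT t ∪ SU t := by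
  ext x; simp only [CU, PT, SU, mem_setOf_eq, mem_union]
  constructor
  · intro h; rcases eq_or_lt_of_le h with h | h
    · exact Or.inl h.symm
    · exact Or.inr h
  · rintro (h | h)
    exacts [h.ge, h.le]

lemma measure_CU (μ : Measure I) (t : ℝ) : μ (CU t) = μ (PT t) + μ (SU t) := by
  rw [CU_eq_union]
  refine measure_union ?_ (measurable_SU t)
  rw [Set.disjoint_left]
  intro x hx1 hx2
  simp only [PT, mem_setOf_eq] at hx1
  simp only [SU, mem_setOf_eq] at hx2
  rw [hx1] at hx2
  exact lt_irrefl t hx2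

/-- lower bound on the closed upper tail -/
lemma le_measure_CU (μ : Measure I) [IsProbabilityMeasure μ] {u : ℝ} (hu : 0 ≤ u) (hu1 : u ≤ 1) :
    ENNReal.ofReal u ≤ μ (CU (qf μ u)) := by
  set q := qf μ u with hq
  rcases eq_or_lt_of_le (qf_mem_Icc μ hu).1 with h0 | h0
  · have : CU q = univ := by
      ext x; simp only [CU, mem_setOf_eq, mem_univ, iff_true]
      rw [hq, ← h0]; exact x.2.1
    rw [this, measure_univ]
    exact ENNReal.ofReal_le_one.mpr hu1
  · have hI : CU q = ⋂ n : ℕ, SU (q - 1/(n+1)) := by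
      ext x
      simp only [CU, SU, mem_setOf_eq, mem_iInter]
      constructor
      · intro h n
        have : (0:ℝ) < 1/(n+1) := by positivity
        linarith
      · intro h
        by_contra hc
        push_neg at hc
        obtain ⟨n, hn⟩ := exists_nat_one_div_lt (sub_pos.mpr hc)
        have := h n
        push_cast at hn this
        linarith
    have hanti : Antitone (fun n : ℕ => SU (q - 1/(n+1))) := by
      intro m n hmn x hx
      have hc : (m:ℝ) ≤ n := Nat.cast_le.mpr hmn
      have : (1:ℝ)/(n+1) ≤ 1/(m+1) := by
        apply one_div_le_one_div_of_le (by positivity)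
        linarith
      simp only [SU, mem_setOf_eq] at hx ⊢
      linarith
    rw [hI, hanti.measure_iInter (fun n => (measurable_SU _).nullMeasurableSet)
      ⟨0, measure_ne_top μ _⟩]
    apply le_iInf
    intro n
    have h1n : (0:ℝ) < 1/(n+1) := by positivity
    set t := max 0 (q - 1/(n+1)) with ht
    have htq : t < q := by
      rcases max_cases 0 (q - 1/(n+1)) with ⟨h, _⟩ | ⟨h, _⟩ <;> rw [ht, h] <;> linarith
    have htI : t ∈ Icc (0:ℝ) 1 := ⟨le_max_left _ _, le_trans htq.le (qf_mem_Icc μ hu).2⟩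
    have : t ∉ qS μ u := notMem_of_lt_csInf htq (qS_bddBelow μ u)
    have hFt : ENNReal.ofReal u < Ff μ t := by
      by_contra hc
      exact this ⟨htI, not_lt.mp hc⟩
    calc ENNReal.ofReal u ≤ Ff μ t := hFt.le
      _ ≤ μ (SU (q - 1/(n+1))) := Ff_anti μ (le_max_right _ _)

def cA (μ : Measure I) (u : ℝ) : ℝ≥0∞ := ENNReal.ofReal u - Ff μ (qf μ u)

def kap (μ : Measure I) (u : ℝ) : Measure I :=
  μ.restrict (SU (qf μ u)) + cA μ u • Measure.dirac (pI (qf μ u))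

lemma kap_apply (μ : Measure I) (u : ℝ) {E : Set I} (hE : MeasurableSet E) :
    kap μ u E = μ (E ∩ SU (qf μ u)) + (if pI (qf μ u) ∈ E then cA μ u else 0) := by
  rw [kap, Measure.add_apply, Measure.restrict_apply hE, Measure.smul_apply,
    Measure.dirac_apply' _ hE]
  congr 1
  by_cases h : pI (qf μ u) ∈ E <;> simp [h]

lemma cA_le (μ : Measure I) [IsProbabilityMeasure μ] {u : ℝ} (hu : 0 ≤ u) (hu1 : u ≤ 1) :
    cA μ u ≤ μ (PT (qf μ u)) := by
  rw [cA, tsub_le_iff_right]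
  calc ENNReal.ofReal u ≤ μ (CU (qf μ u)) := le_measure_CU μ hu hu1
    _ = μ (PT (qf μ u)) + Ff μ (qf μ u) := measure_CU μ _

lemma pI_qf_coe (μ : Measure I) {u : ℝ} (hu : 0 ≤ u) : ((pI (qf μ u) : I) : ℝ) = qf μ u :=
  pI_coe (qf_mem_Icc μ hu)

lemma kap_le (μ : Measure I) [IsProbabilityMeasure μ] {u : ℝ} (hu : 0 ≤ u) (hu1 : u ≤ 1) :
    kap μ u ≤ μ := by
  rw [Measure.le_iff]
  intro E hE
  rw [kap_apply μ u hE]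
  by_cases h : pI (qf μ u) ∈ E
  · simp only [h, if_true]
    have hd : Disjoint (E ∩ SU (qf μ u)) {pI (qf μ u)} := by
      rw [Set.disjoint_singleton_right]
      rintro ⟨-, hmem⟩
      simp only [SU, mem_setOf_eq, pI_qf_coe μ hu] at hmem
      exact lt_irrefl _ hmem
    calc μ (E ∩ SU (qf μ u)) + cA μ u
        ≤ μ (E ∩ SU (qf μ u)) + μ {pI (qf μ u)} := by
          gcongr
          calc cA μ u ≤ μ (PT (qf μ u)) := cA_le μ hu hu1
            _ = μ {pI (qf μ u)} := by rw [PT_eq_singleton (qf_mem_Icc μ hu)]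
      _ = μ (E ∩ SU (qf μ u) ∪ {pI (qf μ u)}) :=
          (measure_union hd (measurableSet_singleton _)).symm
      _ ≤ μ E := measure_mono (by
          apply union_subset inter_subset_left (singleton_subset_iff.mpr h))
  · simp only [h, if_false, add_zero]
    exact measure_mono inter_subset_left

lemma kap_univ (μ : Measure I) {u : ℝ} (hu : 0 ≤ u) :
    kap μ u univ = ENNReal.ofReal u := by
  rw [kap_apply μ u MeasurableSet.univ]
  simp only [univ_inter, mem_univ, if_true, cA]
  exact add_tsub_cancel_of_le (Ff_qf_le μ hu)

instance kap_finite (μ : Measure I) [IsFiniteMeasure μ] (u : ℝ) :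
    IsFiniteMeasure (kap μ u) := by
  constructor
  rw [kap_apply μ u MeasurableSet.univ]
  apply ENNReal.add_lt_top.mpr
  constructor
  · exact lt_of_le_of_lt (measure_mono inter_subset_left) (measure_lt_top μ univ)
  · refine lt_of_le_of_lt ?_ (show ENNReal.ofReal u < ⊤ from ENNReal.ofReal_lt_top)
    split
    · exact tsub_le_self
    · exact zero_le

lemma qf_anti (μ : Measure I) {u v : ℝ} (hu : 0 ≤ u) (huv : u ≤ v) : qf μ v ≤ qf μ u := by
  apply csInf_le_csInf (qS_bddBelow μ v) (qS_nonempty μ hu)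
  intro t ht
  exact ⟨ht.1, le_trans ht.2 (ENNReal.ofReal_le_ofReal huv)⟩

lemma kap_mono (μ : Measure I) [IsProbabilityMeasure μ] {u v : ℝ} (hu : 0 ≤ u) (huv : u ≤ v)
    (hv1 : v ≤ 1) : kap μ u ≤ kap μ v := by
  have hv : 0 ≤ v := le_trans hu huv
  have hq : qf μ v ≤ qf μ u := qf_anti μ hu huv
  rw [Measure.le_iff]
  intro E hE
  rcases eq_or_lt_of_le hq with heq | hlt
  · rw [kap_apply μ u hE, kap_apply μ v hE, heq]
    apply add_le_add le_rfl
    by_cases h : pI (qf μ u) ∈ E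
    · simp only [h, if_true]
      rw [cA, cA, heq]
      exact tsub_le_tsub_right (ENNReal.ofReal_le_ofReal huv) _
    · simp [h]
  · rw [kap_apply μ u hE, kap_apply μ v hE]
    have key : μ (E ∩ SU (qf μ u)) + (if pI (qf μ u) ∈ E then cA μ u else 0)
        ≤ μ (E ∩ SU (qf μ v)) := by
      by_cases h : pI (qf μ u) ∈ E
      · simp only [h, if_true]
        have hd : Disjoint (E ∩ SU (qf μ u)) {pI (qf μ u)} := by
          rw [Set.disjoint_singleton_right]
          rintro ⟨-, hmem⟩
          simp only [SU, mem_setOf_eq, pI_qf_coe μ hu] at hmem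
          exact lt_irrefl _ hmem
        calc μ (E ∩ SU (qf μ u)) + cA μ u
            ≤ μ (E ∩ SU (qf μ u)) + μ {pI (qf μ u)} := by
              gcongr
              calc cA μ u ≤ μ (PT (qf μ u)) := cA_le μ hu (le_trans huv hv1)
                _ = μ {pI (qf μ u)} := by rw [PT_eq_singleton (qf_mem_Icc μ hu)]
          _ = μ (E ∩ SU (qf μ u) ∪ {pI (qf μ u)}) :=
              (measure_union hd (measurableSet_singleton _)).symm
          _ ≤ μ (E ∩ SU (qf μ v)) := measure_mono (by
              apply union_subset
              · intro x hx
                exact ⟨hx.1, lt_trans hlt hx.2⟩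
              · rw [singleton_subset_iff]
                refine ⟨h, ?_⟩
                simp only [SU, mem_setOf_eq, pI_qf_coe μ hu]
                exact hlt)
      · simp only [h, if_false, add_zero]
        apply measure_mono
        intro x hx
        exact ⟨hx.1, lt_trans hlt hx.2⟩
    exact le_trans key (le_add_right le_rfl)


lemma kap_SL (μ : Measure I) {u : ℝ} (hu : 0 ≤ u) : kap μ u (SL (qf μ u)) = 0 := by
  rw [kap_apply μ u (measurable_SL _)]
  have h1 : SL (qf μ u) ∩ SU (qf μ u) = ∅ := by
    ext x; simp only [SL, SU, mem_setOf_eq, mem_inter_iff, mem_empty_iff_false, iff_false]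
    rintro ⟨h1, h2⟩; linarith
  have h2 : pI (qf μ u) ∉ SL (qf μ u) := by
    simp only [SL, mem_setOf_eq, pI_qf_coe μ hu]
    exact lt_irrefl _
  simp [h1, h2]

lemma kap_SU_tail (μ : Measure I) {u s : ℝ} (hu : 0 ≤ u) (hs : qf μ u ≤ s) :
    kap μ u (SU s) = μ (SU s) := by
  rw [kap_apply μ u (measurable_SU _)]
  have h1 : SU s ∩ SU (qf μ u) = SU s := by
    apply inter_eq_self_of_subset_left
    intro x hx
    exact lt_of_le_of_lt hs hx
  have h2 : pI (qf μ u) ∉ SU s := by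
    simp only [SU, mem_setOf_eq, pI_qf_coe μ hu]
    exact not_lt.mpr hs
  simp [h1, h2]

lemma meas_ofReal_coe : Measurable (fun x : I => ENNReal.ofReal (x:ℝ)) :=
  ENNReal.measurable_ofReal.comp measurable_subtype_coe

def mmE (μ : Measure I) (u : ℝ) : ℝ≥0∞ := ∫⁻ x, ENNReal.ofReal (x:ℝ) ∂(kap μ u)

lemma lintegral_coe_le (ρ : Measure I) {s : ℝ} (h : ρ (SU s) = 0) :
    ∫⁻ x, ENNReal.ofReal (x:ℝ) ∂ρ ≤ ENNReal.ofReal s * ρ univ := by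
  have hae : ∀ᵐ (x : I) ∂ρ, ENNReal.ofReal (x:ℝ) ≤ ENNReal.ofReal s := by
    rw [ae_iff]
    apply measure_mono_null _ h
    intro x hx
    simp only [mem_setOf_eq, not_le] at hx
    simp only [SU, mem_setOf_eq]
    by_contra hc
    exact absurd (ENNReal.ofReal_le_ofReal (not_lt.mp hc)) (not_le.mpr hx)
  calc ∫⁻ x, ENNReal.ofReal (x:ℝ) ∂ρ ≤ ∫⁻ _, ENNReal.ofReal s ∂ρ := lintegral_mono_ae hae
    _ = ENNReal.ofReal s * ρ univ := by rw [lintegral_const]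

lemma le_lintegral_coe (ρ : Measure I) {s : ℝ} (h : ρ (SL s) = 0) :
    ENNReal.ofReal s * ρ univ ≤ ∫⁻ x, ENNReal.ofReal (x:ℝ) ∂ρ := by
  have hae : ∀ᵐ (x : I) ∂ρ, ENNReal.ofReal s ≤ ENNReal.ofReal (x:ℝ) := by
    rw [ae_iff]
    apply measure_mono_null _ h
    intro x hx
    simp only [mem_setOf_eq, not_le] at hx
    simp only [SL, mem_setOf_eq]
    have hx0 : (0:ℝ) ≤ (x:ℝ) := x.2.1
    rcases lt_or_ge (x:ℝ) s with h' | h'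
    · exact h'
    · exact absurd (ENNReal.ofReal_le_ofReal h') (not_le.mpr hx)
  calc ENNReal.ofReal s * ρ univ = ∫⁻ _, ENNReal.ofReal s ∂ρ := (lintegral_const _).symm
    _ ≤ ∫⁻ x, ENNReal.ofReal (x:ℝ) ∂ρ := lintegral_mono_ae hae

lemma lintegral_coe_le_univ (ρ : Measure I) :
    ∫⁻ x, ENNReal.ofReal (x:ℝ) ∂ρ ≤ ρ univ := by
  have : ∀ x : I, ENNReal.ofReal (x:ℝ) ≤ 1 := fun x => ENNReal.ofReal_le_one.mpr x.2.2
  calc ∫⁻ x, ENNReal.ofReal (x:ℝ) ∂ρ ≤ ∫⁻ _, 1 ∂ρ := lintegral_mono (fun x => this x)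
    _ = ρ univ := by rw [lintegral_const, one_mul]

lemma mmE_le (μ : Measure I) {u : ℝ} (hu : 0 ≤ u) : mmE μ u ≤ ENNReal.ofReal u := by
  rw [mmE, ← kap_univ μ hu]
  exact lintegral_coe_le_univ _

lemma mmE_ne_top (μ : Measure I) {u : ℝ} (hu : 0 ≤ u) : mmE μ u ≠ ⊤ :=
  ne_top_of_le_ne_top ENNReal.ofReal_ne_top (mmE_le μ hu)

def mR (μ : Measure I) (u : ℝ) : ℝ := (mmE μ u).toReal

lemma mmE_split (μ : Measure I) [IsProbabilityMeasure μ] {u v : ℝ} (hu : 0 ≤ u) (huv : u ≤ v)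
    (hv1 : v ≤ 1) :
    mmE μ v = (∫⁻ x, ENNReal.ofReal (x:ℝ) ∂(kap μ v - kap μ u)) + mmE μ u := by
  conv_lhs => rw [mmE, ← Measure.sub_add_cancel_of_le (kap_mono μ hu huv hv1)]
  rw [lintegral_add_measure]
  rfl

lemma sub_univ (μ : Measure I) [IsProbabilityMeasure μ] {u v : ℝ} (hu : 0 ≤ u) (huv : u ≤ v)
    (hv1 : v ≤ 1) : (kap μ v - kap μ u) univ = ENNReal.ofReal (v - u) := by
  rw [Measure.sub_apply MeasurableSet.univ (kap_mono μ hu huv hv1),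
    kap_univ μ (le_trans hu huv), kap_univ μ hu, ENNReal.ofReal_sub _ hu]

lemma sub_SU (μ : Measure I) [IsProbabilityMeasure μ] {u v : ℝ} (hu : 0 ≤ u) (huv : u ≤ v)
    (hv1 : v ≤ 1) : (kap μ v - kap μ u) (SU (qf μ u)) = 0 := by
  rw [Measure.sub_apply (measurable_SU _) (kap_mono μ hu huv hv1),
    kap_SU_tail μ (le_trans hu huv) (qf_anti μ hu huv), kap_SU_tail μ hu le_rfl, tsub_self]

lemma mR_diff_bounds (μ : Measure I) [IsProbabilityMeasure μ] {u v : ℝ} (hu : 0 ≤ u)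
    (huv : u ≤ v) (hv1 : v ≤ 1) :
    0 ≤ mR μ v - mR μ u ∧ mR μ v - mR μ u ≤ v - u ∧
      mR μ v - mR μ u ≤ qf μ u * (v - u) := by
  have hv : 0 ≤ v := le_trans hu huv
  set J := ∫⁻ x, ENNReal.ofReal (x:ℝ) ∂(kap μ v - kap μ u) with hJ
  have hsplit := mmE_split μ hu huv hv1
  have hJ1 : J ≤ ENNReal.ofReal (v - u) := by
    rw [← sub_univ μ hu huv hv1]
    exact lintegral_coe_le_univ _
  have hJtop : J ≠ ⊤ := ne_top_of_le_ne_top ENNReal.ofReal_ne_top hJ1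
  have hJq : J ≤ ENNReal.ofReal (qf μ u) * ENNReal.ofReal (v - u) := by
    rw [← sub_univ μ hu huv hv1]
    exact lintegral_coe_le _ (sub_SU μ hu huv hv1)
  have htr : mR μ v = J.toReal + mR μ u := by
    rw [mR, mR, hsplit, ENNReal.toReal_add hJtop (mmE_ne_top μ hu)]
  refine ⟨?_, ?_, ?_⟩
  · rw [htr]; simp [ENNReal.toReal_nonneg]
  · rw [htr]
    have := ENNReal.toReal_mono ENNReal.ofReal_ne_top hJ1
    rw [ENNReal.toReal_ofReal (by linarith)] at this
    linarith
  · rw [htr]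
    have := ENNReal.toReal_mono (by
      exact ENNReal.mul_ne_top ENNReal.ofReal_ne_top ENNReal.ofReal_ne_top) hJq
    rw [ENNReal.toReal_mul, ENNReal.toReal_ofReal (qf_mem_Icc μ hu).1,
      ENNReal.toReal_ofReal (by linarith)] at this
    linarith

lemma qf_mul_le_mR (μ : Measure I) [IsProbabilityMeasure μ] {u : ℝ} (hu : 0 ≤ u) :
    qf μ u * u ≤ mR μ u := by
  have := le_lintegral_coe (kap μ u) (kap_SL μ hu)
  rw [kap_univ μ hu, ← ENNReal.ofReal_mul (qf_mem_Icc μ hu).1] at this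
  have h2 := ENNReal.toReal_mono (mmE_ne_top μ hu) this
  rw [ENNReal.toReal_ofReal (mul_nonneg (qf_mem_Icc μ hu).1 hu)] at h2
  exact h2

lemma mR_avg_anti (μ : Measure I) [IsProbabilityMeasure μ] {u v : ℝ} (hu : 0 < u)
    (huv : u ≤ v) (hv1 : v ≤ 1) : mR μ v * u ≤ mR μ u * v := by
  obtain ⟨h0, h1, h2⟩ := mR_diff_bounds μ hu.le huv hv1
  have h3 := qf_mul_le_mR μ hu.le
  nlinarith [hu, (qf_mem_Icc μ hu.le).1]

lemma intg_eq_toReal (ν : Measure I) :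
    intg ν = (∫⁻ x, ENNReal.ofReal (x:ℝ) ∂ν).toReal := by
  rw [intg, integral_eq_lintegral_of_nonneg_ae
    (Filter.Eventually.of_forall (fun x => x.2.1))
    continuous_subtype_val.aestronglyMeasurable]

lemma meas_partition (ν : Measure I) (t : ℝ) {E : Set I} (hE : MeasurableSet E) :
    ν E = ν (E ∩ SL t) + ν (E ∩ PT t) + ν (E ∩ SU t) := by
  have h1 : E = (E ∩ SL t) ∪ ((E ∩ PT t) ∪ (E ∩ SU t)) := by
    ext x
    simp only [SL, PT, SU, mem_union, mem_inter_iff, mem_setOf_eq]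
    constructor
    · intro hx
      rcases lt_trichotomy ((x:ℝ)) t with h | h | h
      · exact Or.inl ⟨hx, h⟩
      · exact Or.inr (Or.inl ⟨hx, h⟩)
      · exact Or.inr (Or.inr ⟨hx, h⟩)
    · rintro (⟨h, -⟩ | ⟨h, -⟩ | ⟨h, -⟩) <;> exact h
  conv_lhs => rw [h1]
  rw [measure_union ?d1 ((hE.inter (measurable_PT t)).union (hE.inter (measurable_SU t))),
    measure_union ?d2 (hE.inter (measurable_SU t)), add_assoc]
  case d1 =>
    rw [Set.disjoint_left]
    rintro x ⟨-, hx1⟩ (⟨-, hx2⟩ | ⟨-, hx2⟩) <;>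
      simp only [SL, PT, SU, mem_setOf_eq] at hx1 hx2 <;> linarith [hx2.le]
  case d2 =>
    rw [Set.disjoint_left]
    rintro x ⟨-, hx1⟩ ⟨-, hx2⟩
    simp only [PT, SU, mem_setOf_eq] at hx1 hx2
    linarith [hx1.le]

lemma eq_on_subsets {ν μ : Measure I} (hle : ν ≤ μ) {S A : Set I} (hSm : MeasurableSet S)
    (hAm : MeasurableSet A) (hAS : A ⊆ S) (hS : ν S = μ S) (hfin : μ S ≠ ⊤) :
    ν A = μ A := by
  refine le_antisymm (hle A) ?_
  by_contra hc
  push_neg at hc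
  have h1 : ν A + ν (S \ A) = ν S := by
    rw [measure_add_diff hAm.nullMeasurableSet S, union_eq_self_of_subset_left hAS]
  have h2 : μ A + μ (S \ A) = μ S := by
    rw [measure_add_diff hAm.nullMeasurableSet S, union_eq_self_of_subset_left hAS]
  have h3 : ν (S \ A) ≤ μ (S \ A) := hle _
  have : ν S < μ S := by
    rw [← h1, ← h2]
    apply ENNReal.add_lt_add_of_lt_of_le _ hc h3
    · exact ne_top_of_le_ne_top hfin (le_trans h3 (by rw [← h2]; exact le_add_self))
  rw [hS] at this
  exact lt_irrefl _ this

lemma greedy_eq_kap (l : ℝ) (μ ν : Measure I) [IsProbabilityMeasure μ]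
    (hν : IsGreedy l μ ν) : ν = kap μ (tmass ν) := by
  obtain ⟨hle, hbary, y, hy0, hy1, hrestr, hvan⟩ := hν
  set α := tmass ν with hα
  have hνfin : ν univ ≠ ⊤ := ne_top_of_le_ne_top (measure_ne_top μ univ) (hle univ)
  have hνuniv : ν univ = ENNReal.ofReal α := by
    rw [hα, tmass, ENNReal.ofReal_toReal hνfin]
  have hα0 : 0 ≤ α := by rw [hα, tmass]; exact ENNReal.toReal_nonneg
  have hνSU : ∀ E : Set I, MeasurableSet E → ν (E ∩ SU y) = μ (E ∩ SU y) := by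
    intro E hE
    have h1 := congrArg (fun m : Measure I => m E) hrestr
    exact (by simpa only [Measure.restrict_apply hE] using h1 : ν (E ∩ {x : I | y < (x:ℝ)}) = μ (E ∩ {x : I | y < (x:ℝ)}))
  have hSUy : ν (SU y) = μ (SU y) := by
    have := hνSU univ MeasurableSet.univ
    simp only [univ_inter] at this
    exact this
  have hFy : Ff μ y ≤ ENNReal.ofReal α := by
    rw [Ff, ← hSUy, ← hνuniv]
    exact measure_mono (subset_univ _)
  have hq : qf μ α ≤ y := csInf_le (qS_bddBelow μ α) ⟨⟨hy0, hy1⟩, hFy⟩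
  set q := qf μ α with hqdef
  have hνrep : ∀ E : Set I, MeasurableSet E → ν E = ν (E ∩ PT y) + μ (E ∩ SU y) := by
    intro E hE
    rw [meas_partition ν y hE, hνSU E hE]
    have : ν (E ∩ SL y) = 0 :=
      measure_mono_null (fun x hx => hx.2) hvan
    rw [this, zero_add]
  have hCUν : ν (CU y) = ENNReal.ofReal α := by
    rw [← hνuniv]
    refine le_antisymm (measure_mono (subset_univ _)) ?_
    have := meas_partition ν y MeasurableSet.univ
    simp only [univ_inter] at this
    have hSL : ν (SL y) = 0 := hvan
    rw [this, hSL, zero_add, measure_CU ν y]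
  have hCU : ENNReal.ofReal α ≤ μ (CU y) := hCUν ▸ hle (CU y)
  rcases eq_or_lt_of_le hq with heq | hlt
  · -- q = y
    apply Measure.ext
    intro E hE
    rw [kap_apply μ α hE, ← hqdef, heq, hνrep E hE, add_comm (ν (E ∩ PT y))]
    congr 1
    have hPTy : PT y = {pI y} := PT_eq_singleton ⟨hy0, hy1⟩
    have hFfy_ne : Ff μ y ≠ ⊤ := measure_ne_top μ _
    have hatom : ν (PT y) = cA μ α := by
      have h1 : ν (PT y) + Ff μ y = ENNReal.ofReal α := by
        rw [← hCUν, measure_CU ν y, Ff, hSUy]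
      have h2 : cA μ α = ENNReal.ofReal α - Ff μ y := by
        unfold cA
        rw [← hqdef, heq]
      rw [h2]
      exact ENNReal.eq_sub_of_add_eq hFfy_ne h1
    by_cases h : pI y ∈ E
    · have hEP : E ∩ PT y = PT y := by
        rw [hPTy]; exact inter_eq_self_of_subset_right (singleton_subset_iff.mpr h)
      rw [hEP, hatom, if_pos h]
    · have hEP : E ∩ PT y = ∅ := by
        rw [hPTy, ← disjoint_iff_inter_eq_empty, Set.disjoint_singleton_right]
        exact h
      rw [hEP, measure_empty, if_neg h]
  · -- q < y
    have hFq : Ff μ q = ENNReal.ofReal α :=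
      le_antisymm (Ff_qf_le μ hα0) (le_trans hCU (measure_mono (fun x hx => lt_of_lt_of_le hlt hx)))
    have hcA : cA μ α = 0 := by rw [cA, ← hqdef, hFq, tsub_self]
    have hCUeq : μ (CU y) = ENNReal.ofReal α := by
      refine le_antisymm ?_ hCU
      rw [← hFq]
      exact measure_mono (fun x hx => lt_of_lt_of_le hlt hx)
    -- middle has measure zero
    have hmid : μ (SU q ∩ SL y) = 0 := by
      have hsplit : μ (SU q) = μ (SU q ∩ SL y) + μ (CU y) := by
        rw [← measure_union _ (measurable_CU y)]
        · congr 1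
          ext x
          simp only [SU, SL, CU, mem_union, mem_inter_iff, mem_setOf_eq]
          constructor
          · intro hx
            rcases lt_or_ge ((x:ℝ)) y with h | h
            · exact Or.inl ⟨hx, h⟩
            · exact Or.inr h
          · rintro (⟨h, -⟩ | h)
            · exact h
            · exact lt_of_lt_of_le hlt h
        · rw [Set.disjoint_left]
          rintro x ⟨-, hx1⟩ hx2
          simp only [SL, mem_setOf_eq] at hx1
          simp only [CU, mem_setOf_eq] at hx2
          linarith
      rw [Ff] at hFq
      rw [hFq, hCUeq] at hsplit
      have h0 : μ (SU q ∩ SL y) + ENNReal.ofReal α = 0 + ENNReal.ofReal α := by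
        rw [zero_add, ← hsplit]
      exact (ENNReal.add_left_inj ENNReal.ofReal_ne_top).mp h0
    have hFfy_ne : Ff μ y ≠ ⊤ := measure_ne_top μ _
    have hatomfull : ν (PT y) = μ (PT y) := by
      have h1 : ν (PT y) + Ff μ y = ENNReal.ofReal α := by
        rw [← hCUν, measure_CU ν y, Ff, hSUy]
      have h2 : μ (PT y) + Ff μ y = ENNReal.ofReal α := by
        rw [← hCUeq, measure_CU μ y]
        rfl
      rw [← h2] at h1
      exact (ENNReal.add_left_inj hFfy_ne).mp h1
    apply Measure.ext
    intro E hE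
    rw [kap_apply μ α hE, ← hqdef, hcA, hνrep E hE]
    simp only [ite_self, add_zero]
    -- goal: ν (E ∩ PT y) + μ (E ∩ SU y) = μ (E ∩ SU q)
    have hdecomp := meas_partition μ y (hE.inter (measurable_SU q))
    have e1 : μ ((E ∩ SU q) ∩ SL y) = 0 :=
      measure_mono_null (fun x hx => mem_inter hx.1.2 hx.2) hmid
    have e2 : (E ∩ SU q) ∩ PT y = E ∩ PT y := by
      ext x
      simp only [SU, PT, mem_inter_iff, mem_setOf_eq]
      constructor
      · rintro ⟨⟨h1, -⟩, h3⟩; exact ⟨h1, h3⟩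
      · rintro ⟨h1, h2⟩; exact ⟨⟨h1, h2 ▸ hlt⟩, h2⟩
    have e3 : (E ∩ SU q) ∩ SU y = E ∩ SU y := by
      ext x
      simp only [SU, mem_inter_iff, mem_setOf_eq]
      constructor
      · rintro ⟨⟨h1, -⟩, h3⟩; exact ⟨h1, h3⟩
      · rintro ⟨h1, h2⟩; exact ⟨⟨h1, lt_trans hlt h2⟩, h2⟩
    rw [hdecomp, e1, e2, e3, zero_add]
    congr 1
    exact eq_on_subsets hle (measurable_PT y) (hE.inter (measurable_PT y)) inter_subset_right
      hatomfull (measure_ne_top μ _)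

lemma qf_one (μ : Measure I) [IsProbabilityMeasure μ] : qf μ 1 = 0 := by
  have : qS μ 1 = Icc (0:ℝ) 1 := by
    ext t
    simp only [qS, mem_setOf_eq, mem_Icc, and_iff_left_iff_imp]
    intro ht
    rw [ENNReal.ofReal_one]
    calc Ff μ t ≤ μ univ := measure_mono (subset_univ _)
      _ = 1 := measure_univ
  rw [qf, this, csInf_Icc zero_le_one]

lemma kap_one (μ : Measure I) [IsProbabilityMeasure μ] : kap μ 1 = μ := by
  apply Measure.ext
  intro E hE
  rw [kap_apply μ 1 hE, qf_one μ]
  have hSL0 : SL (0:ℝ) = ∅ := by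
    ext x
    simp only [SL, mem_setOf_eq, mem_empty_iff_false, iff_false, not_lt]
    exact x.2.1
  have hrepE := meas_partition μ 0 hE
  rw [hSL0, inter_empty, measure_empty, zero_add] at hrepE
  have hPT0 : PT (0:ℝ) = {pI 0} := PT_eq_singleton ⟨le_rfl, zero_le_one⟩
  have hatom : cA μ 1 = μ (PT 0) := by
    have h2 : μ univ = μ (PT 0) + Ff μ 0 := by
      have := meas_partition μ 0 MeasurableSet.univ
      simp only [univ_inter] at this
      rw [this, hSL0, measure_empty, zero_add]
      rfl
    unfold cA
    rw [qf_one μ, ENNReal.ofReal_one, ← measure_univ (μ := μ), h2]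
    exact ENNReal.add_sub_cancel_right (measure_ne_top μ _)
  rw [hatom, hrepE]
  rw [add_comm (μ (E ∩ PT 0))]
  congr 1
  by_cases h : pI 0 ∈ E
  · rw [if_pos h]
    congr 1
    rw [hPT0]
    exact (inter_eq_self_of_subset_right (singleton_subset_iff.mpr h)).symm
  · rw [if_neg h]
    have : E ∩ PT 0 = ∅ := by
      rw [hPT0, ← disjoint_iff_inter_eq_empty, Set.disjoint_singleton_right]
      exact h
    rw [this, measure_empty]

lemma mR_one (μ : Measure I) [IsProbabilityMeasure μ] : mR μ 1 = intg μ := by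
  rw [mR, mmE, kap_one μ, intg_eq_toReal]

lemma mR_zero (μ : Measure I) [IsProbabilityMeasure μ] : mR μ 0 = 0 := by
  have h : mmE μ 0 = 0 := by
    have := mmE_le μ (le_refl (0:ℝ))
    rw [ENNReal.ofReal_zero] at this
    exact le_antisymm this (zero_le)
  rw [mR, h]; simp

lemma mR_continuousOn (μ : Measure I) [IsProbabilityMeasure μ] :
    ContinuousOn (mR μ) (Icc (0:ℝ) 1) := by
  apply LipschitzOnWith.continuousOn (K := 1)
  rw [lipschitzOnWith_iff_dist_le_mul]
  intro x hx y hy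
  rcases le_total y x with h | h
  · obtain ⟨h0, h1, -⟩ := mR_diff_bounds μ hy.1 h hx.2
    rw [Real.dist_eq, Real.dist_eq, abs_of_nonneg (by linarith), abs_of_nonneg (by linarith)]
    push_cast
    linarith
  · obtain ⟨h0, h1, -⟩ := mR_diff_bounds μ hx.1 h hy.2
    rw [Real.dist_eq, Real.dist_eq, abs_of_nonpos (by linarith), abs_of_nonpos (by linarith)]
    push_cast
    linarith

lemma exists_interval (l : ℝ) (hl : l ∈ Set.Ioo (0:ℝ) 1) (μ₁ : Measure I)
    (hμ₁ : IsProbabilityMeasure μ₁) (hbar : bary μ₁ < l) (hg : greedy l μ₁ ≠ 0)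
    (hα : 0 < gmass l μ₁) (β : ℝ) (hβ0 : 0 < β) (hβα : β ≤ gmass l μ₁) :
    ∃ ν : Measure I, IsIntervalMeasure l μ₁ ν ∧ tmass ν = β := by
  have hex : ∃ ν, IsGreedy l μ₁ ν := by
    by_contra h
    exact hg (by rw [greedy, dif_neg h])
  have hgr : IsGreedy l μ₁ (greedy l μ₁) := by
    rw [greedy, dif_pos hex]
    exact hex.choose_spec
  set α := gmass l μ₁ with hαdef
  have hαt : α = tmass (greedy l μ₁) := rfl
  have hkapα : greedy l μ₁ = kap μ₁ α := greedy_eq_kap l μ₁ _ hgr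
  have htmassμ : tmass μ₁ = 1 := by rw [tmass, measure_univ, ENNReal.toReal_one]
  have hα1 : α ≤ 1 := by
    rw [hαt, tmass, ← ENNReal.toReal_one, ← measure_univ (μ := μ₁)]
    exact ENNReal.toReal_mono (measure_ne_top μ₁ _) (hgr.1 univ)
  have hintg_greedy : intg (greedy l μ₁) = l * α := by
    have hb := hgr.2.1
    rw [bary, ← hαt, div_eq_iff (ne_of_gt hα)] at hb
    exact hb
  have hmRα : mR μ₁ α = l * α := by
    rw [mR, mmE, ← hkapα, ← intg_eq_toReal]
    exact hintg_greedy
  have hαlt1 : α < 1 := by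
    rcases lt_or_eq_of_le hα1 with h | h
    · exact h
    · exfalso
      rw [h] at hmRα
      rw [mR_one μ₁] at hmRα
      have : bary μ₁ = intg μ₁ := by rw [bary, htmassμ, div_one]
      rw [this, hmRα] at hbar
      linarith
  have hβ1 : β < 1 := lt_of_le_of_lt hβα hαlt1
  have h1β : 0 < 1 - β := by linarith
  -- endpoint values
  have hlow : l * β ≤ mR μ₁ β := by
    have := mR_avg_anti μ₁ hβ0 hβα hα1
    rw [hmRα] at this
    nlinarith
  have hhigh : mR μ₁ 1 - mR μ₁ (1 - β) < l * β := by
    have h2 := mR_avg_anti μ₁ h1β (by linarith : 1 - β ≤ 1) le_rfl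
    have h3 : mR μ₁ 1 = bary μ₁ := by rw [mR_one μ₁, bary, htmassμ, div_one]
    nlinarith [hl.1]
  -- IVT
  set g : ℝ → ℝ := fun u => mR μ₁ (u + β) - mR μ₁ u with hgdef
  have hgcont : ContinuousOn g (Icc (0:ℝ) (1 - β)) := by
    apply ContinuousOn.sub
    · have hc : Continuous (fun x : ℝ => x + β) := continuous_add_right β
      apply (mR_continuousOn μ₁).comp hc.continuousOn
      intro x hx
      simp only [mem_Icc] at hx ⊢
      constructor
      · linarith [hx.1]
      · linarith [hx.2]
    · exact (mR_continuousOn μ₁).mono (fun u hu => ⟨hu.1, by linarith [hu.2]⟩)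
  have hmem : l * β ∈ Icc (g (1 - β)) (g 0) := by
    constructor
    · show g (1-β) ≤ l * β
      rw [hgdef]
      simp only
      rw [sub_add_cancel]
      exact (hhigh).le
    · show l * β ≤ g 0
      rw [hgdef]
      simp only
      rw [zero_add, mR_zero μ₁, sub_zero]
      exact hlow
  obtain ⟨u, hu, hgu⟩ := intermediate_value_Icc' (by linarith : (0:ℝ) ≤ 1 - β) hgcont hmem
  set v := u + β with hvdef
  have hu0 : 0 ≤ u := hu.1
  have huv : u ≤ v := by rw [hvdef]; linarith
  have hv1 : v ≤ 1 := by rw [hvdef]; linarith [hu.2]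
  have hv0 : 0 ≤ v := le_trans hu0 huv
  have kmono : kap μ₁ u ≤ kap μ₁ v := kap_mono μ₁ hu0 huv hv1
  set ν := kap μ₁ v - kap μ₁ u with hνdef
  have hνuniv : ν univ = ENNReal.ofReal β := by
    rw [hνdef, sub_univ μ₁ hu0 huv hv1]
    congr 1
    rw [hvdef]; ring
  have htm : tmass ν = β := by rw [tmass, hνuniv, ENNReal.toReal_ofReal hβ0.le]
  -- moment
  have hJle : (∫⁻ x, ENNReal.ofReal (x:ℝ) ∂ν) ≤ ENNReal.ofReal β := by
    calc (∫⁻ x, ENNReal.ofReal (x:ℝ) ∂ν) ≤ ν univ := lintegral_coe_le_univ ν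
      _ = ENNReal.ofReal β := hνuniv
  have hJtop : (∫⁻ x, ENNReal.ofReal (x:ℝ) ∂ν) ≠ ⊤ :=
    ne_top_of_le_ne_top ENNReal.ofReal_ne_top hJle
  have hintgν : intg ν = l * β := by
    have hsplit := mmE_split μ₁ hu0 huv hv1
    have : mR μ₁ v = (∫⁻ x, ENNReal.ofReal (x:ℝ) ∂ν).toReal + mR μ₁ u := by
      rw [mR, mR, hsplit, ENNReal.toReal_add hJtop (mmE_ne_top μ₁ hu0)]
    rw [intg_eq_toReal]
    have hgu' : mR μ₁ v - mR μ₁ u = l * β := hgu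
    linarith
  have hbary : bary ν = l := by
    rw [bary, htm, hintgν, mul_div_assoc, div_self (ne_of_gt hβ0), mul_one]
  have hle : ν ≤ μ₁ := le_trans Measure.sub_le (kap_le μ₁ hv0 hv1)
  refine ⟨ν, ⟨hle, hbary, qf μ₁ v, qf μ₁ u, (qf_mem_Icc μ₁ hv0).1, qf_anti μ₁ hu0 huv,
    (qf_mem_Icc μ₁ hu0).2, ?_, ?_⟩, htm⟩
  · -- restrict equality on mid
    set y₁ := qf μ₁ v
    set y₂ := qf μ₁ u
    have hmidset : {x : I | y₁ < (x:ℝ) ∧ (x:ℝ) < y₂} = SU y₁ ∩ SL y₂ := rfl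
    rw [hmidset]
    have hmm : MeasurableSet (SU y₁ ∩ SL y₂) := (measurable_SU y₁).inter (measurable_SL y₂)
    apply Measure.ext
    intro E hE
    rw [Measure.restrict_apply hE, Measure.restrict_apply hE, hνdef,
      Measure.sub_apply (hE.inter hmm) kmono]
    have hv_eq : kap μ₁ v (E ∩ (SU y₁ ∩ SL y₂)) = μ₁ (E ∩ (SU y₁ ∩ SL y₂)) := by
      rw [kap_apply μ₁ v (hE.inter hmm)]
      have h1 : (E ∩ (SU y₁ ∩ SL y₂)) ∩ SU (qf μ₁ v) = E ∩ (SU y₁ ∩ SL y₂) :=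
        inter_eq_self_of_subset_left (fun x hx => hx.2.1)
      have h2 : pI (qf μ₁ v) ∉ E ∩ (SU y₁ ∩ SL y₂) := by
        rintro ⟨-, h, -⟩
        simp only [SU, mem_setOf_eq, pI_qf_coe μ₁ hv0] at h
        exact lt_irrefl _ h
      rw [h1, if_neg h2, add_zero]
    have hu_eq : kap μ₁ u (E ∩ (SU y₁ ∩ SL y₂)) = 0 := by
      rw [kap_apply μ₁ u (hE.inter hmm)]
      have h1 : (E ∩ (SU y₁ ∩ SL y₂)) ∩ SU (qf μ₁ u) = ∅ := by
        rw [← disjoint_iff_inter_eq_empty, Set.disjoint_right]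
        rintro x hx ⟨-, -, h2⟩
        simp only [SU, mem_setOf_eq] at hx
        simp only [SL, mem_setOf_eq] at h2
        exact absurd hx (not_lt.mpr h2.le)
      have h2 : pI (qf μ₁ u) ∉ E ∩ (SU y₁ ∩ SL y₂) := by
        rintro ⟨-, -, h⟩
        simp only [SL, mem_setOf_eq, pI_qf_coe μ₁ hu0] at h
        exact lt_irrefl _ h
      rw [h1, measure_empty, if_neg h2, add_zero]
    rw [hv_eq, hu_eq, tsub_zero]
  · -- vanishing outside
    set y₁ := qf μ₁ v
    set y₂ := qf μ₁ u
    have houtset : {x : I | (x:ℝ) < y₁ ∨ y₂ < (x:ℝ)} = SL y₁ ∪ SU y₂ := rfl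
    rw [houtset]
    apply measure_union_null
    · rw [hνdef, Measure.sub_apply (measurable_SL y₁) kmono, kap_SL μ₁ hv0, zero_tsub]
    · rw [hνdef]
      exact sub_SU μ₁ hu0 huv hv1

lemma integrable_aux (sg : Measure I) [IsFiniteMeasure sg] (c : ℝ) :
    Integrable (fun x : I => (x:ℝ) - c) sg := by
  apply Integrable.mono' (integrable_const (2 + |c|))
  · exact (continuous_subtype_val.sub continuous_const).aestronglyMeasurable
  · apply Filter.Eventually.of_forall
    intro x
    rw [Real.norm_eq_abs]
    have h1 : |(x:ℝ)| ≤ 1 := abs_le.mpr ⟨by linarith [x.2.1], x.2.2⟩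
    calc |(x:ℝ) - c| ≤ |(x:ℝ)| + |c| := abs_sub _ _
      _ ≤ 2 + |c| := by linarith

lemma restrict_partition (sg : Measure I) (c : ℝ) :
    sg = sg.restrict (SL c) + sg.restrict (PT c) + sg.restrict (SU c) := by
  apply Measure.ext
  intro E hE
  rw [Measure.add_apply, Measure.add_apply, Measure.restrict_apply hE,
    Measure.restrict_apply hE, Measure.restrict_apply hE]
  exact meas_partition sg c hE

set_option maxHeartbeats 1000000 in
lemma master {μ ν ν' : Measure I} [IsProbabilityMeasure μ] (hle : ν ≤ μ) (hle' : ν' ≤ μ)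
    (hm : ν univ = ν' univ) (hi : intg ν = intg ν') {c : ℝ} (hc : c ∈ Icc (0:ℝ) 1)
    (hbelow : ν'.restrict (SL c) ≤ ν.restrict (SL c))
    (habove : ν.restrict (SU c) ≤ ν'.restrict (SU c)) : ν = ν' := by
  haveI hfν : IsFiniteMeasure ν := ⟨lt_of_le_of_lt (hle univ) (measure_lt_top μ univ)⟩
  haveI hfν' : IsFiniteMeasure ν' := ⟨lt_of_le_of_lt (hle' univ) (measure_lt_top μ univ)⟩
  set ρ := ν.restrict (SL c) - ν'.restrict (SL c) with hρdef
  set τ := ν'.restrict (SU c) - ν.restrict (SU c) with hτdef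
  have hρadd : ρ + ν'.restrict (SL c) = ν.restrict (SL c) :=
    Measure.sub_add_cancel_of_le hbelow
  have hτadd : τ + ν.restrict (SU c) = ν'.restrict (SU c) :=
    Measure.sub_add_cancel_of_le habove
  haveI hfρ : IsFiniteMeasure ρ := ⟨by
    apply lt_of_le_of_lt (Measure.sub_le (μ := ν.restrict (SL c)) univ)
    exact measure_lt_top _ _⟩
  haveI hfτ : IsFiniteMeasure τ := ⟨by
    apply lt_of_le_of_lt (Measure.sub_le (μ := ν'.restrict (SU c)) univ)
    exact measure_lt_top _ _⟩
  have hρnull : ρ (SL c)ᶜ = 0 := by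
    apply le_antisymm _ (zero_le)
    calc ρ (SL c)ᶜ ≤ ν.restrict (SL c) (SL c)ᶜ := Measure.sub_le _
      _ = ν ((SL c)ᶜ ∩ SL c) := Measure.restrict_apply (measurable_SL c).compl
      _ = 0 := by rw [compl_inter_self, measure_empty]
  have hτnull : τ (SU c)ᶜ = 0 := by
    apply le_antisymm _ (zero_le)
    calc τ (SU c)ᶜ ≤ ν'.restrict (SU c) (SU c)ᶜ := Measure.sub_le _
      _ = ν' ((SU c)ᶜ ∩ SU c) := Measure.restrict_apply (measurable_SU c).compl
      _ = 0 := by rw [compl_inter_self, measure_empty]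
  -- the W functional
  set W : Measure I → ℝ := fun sg => ∫ x, ((x:ℝ) - c) ∂sg with hWdef
  have hWadd : ∀ sg₁ sg₂ : Measure I, IsFiniteMeasure sg₁ → IsFiniteMeasure sg₂ →
      W (sg₁ + sg₂) = W sg₁ + W sg₂ := by
    intro sg₁ sg₂ h1 h2
    exact integral_add_measure (integrable_aux sg₁ c) (integrable_aux sg₂ c)
  have hWPT : ∀ sg : Measure I, W (sg.restrict (PT c)) = 0 := by
    intro sg
    apply integral_eq_zero_of_ae
    have hzz : ∀ᵐ (x : I) ∂(sg.restrict (PT c)), ((x:ℝ) - c) = 0 := by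
      rw [ae_restrict_iff' (measurable_PT c)]
      apply Filter.Eventually.of_forall
      intro x hx
      simp only [PT, mem_setOf_eq] at hx
      simp [hx]
    filter_upwards [hzz] with x hx
    simpa using hx
  have hWν : W ν = W ν' := by
    rw [hWdef]
    simp only
    rw [integral_sub (Integrable.mono' (integrable_const 1)
        continuous_subtype_val.aestronglyMeasurable
        (Filter.Eventually.of_forall (fun x => by
          rw [Real.norm_eq_abs]; exact abs_le.mpr ⟨by linarith [x.2.1], x.2.2⟩)))
      (integrable_const c),
      integral_sub (Integrable.mono' (integrable_const 1)
        continuous_subtype_val.aestronglyMeasurable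
        (Filter.Eventually.of_forall (fun x => by
          rw [Real.norm_eq_abs]; exact abs_le.mpr ⟨by linarith [x.2.1], x.2.2⟩)))
      (integrable_const c),
      integral_const, integral_const, measureReal_def, measureReal_def, hm]
    have : (∫ x, (x:ℝ) ∂ν) = ∫ x, (x:ℝ) ∂ν' := hi
    rw [this]
  have hdecompν : W ν = W ρ + W (ν'.restrict (SL c)) + W (ν.restrict (SU c)) := by
    conv_lhs => rw [restrict_partition ν c]
    rw [hWadd _ _ (by infer_instance) (by infer_instance),
      hWadd _ _ (by infer_instance) (by infer_instance), hWPT, add_zero, ← hρadd,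
      hWadd _ _ (by infer_instance) (by infer_instance)]
  have hdecompν' : W ν' = W (ν'.restrict (SL c)) + (W τ + W (ν.restrict (SU c))) := by
    conv_lhs => rw [restrict_partition ν' c]
    rw [hWadd _ _ (by infer_instance) (by infer_instance),
      hWadd _ _ (by infer_instance) (by infer_instance), hWPT, add_zero, ← hτadd,
      hWadd _ _ (by infer_instance) (by infer_instance)]
  have hWρτ : W ρ = W τ := by
    rw [hdecompν, hdecompν'] at hWν
    linarith
  have hWρ_nonpos : W ρ ≤ 0 := by
    apply integral_nonpos_of_ae
    rw [Filter.EventuallyLE, ae_iff]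
    apply measure_mono_null _ hρnull
    intro x hx
    simp only [mem_setOf_eq, Pi.zero_apply, not_le] at hx
    simp only [mem_compl_iff, SL, mem_setOf_eq, not_lt]
    linarith
  have hWτ_nonneg : 0 ≤ W τ := by
    apply integral_nonneg_of_ae
    rw [Filter.EventuallyLE, ae_iff]
    apply measure_mono_null _ hτnull
    intro x hx
    simp only [mem_setOf_eq, Pi.zero_apply, not_le] at hx
    simp only [mem_compl_iff, SU, mem_setOf_eq, not_lt]
    linarith
  have hWρ0 : W ρ = 0 := le_antisymm hWρ_nonpos (hWρτ ▸ hWτ_nonneg)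
  have hWτ0 : W τ = 0 := hWρτ ▸ hWρ0
  -- conclude ρ = 0
  have hρ0 : ρ = 0 := by
    have hL : ∫ x, (c - (x:ℝ)) ∂ρ = 0 := by
      have : ∫ x, (c - (x:ℝ)) ∂ρ = -W ρ := by
        rw [hWdef, ← integral_neg]
        congr 1
        ext x
        ring
      rw [this, hWρ0, neg_zero]
    have hnn : 0 ≤ᵐ[ρ] fun x : I => c - (x:ℝ) := by
      rw [Filter.EventuallyLE, ae_iff]
      apply measure_mono_null _ hρnull
      intro x hx
      simp only [mem_setOf_eq, Pi.zero_apply, not_le] at hx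
      simp only [mem_compl_iff, SL, mem_setOf_eq, not_lt]
      linarith
    have hmeas : AEStronglyMeasurable (fun x : I => c - (x:ℝ)) ρ :=
      (continuous_const.sub continuous_subtype_val).aestronglyMeasurable
    rw [integral_eq_lintegral_of_nonneg_ae hnn hmeas] at hL
    have hLfin : (∫⁻ x, ENNReal.ofReal (c - (x:ℝ)) ∂ρ) ≠ ⊤ := by
      apply ne_top_of_le_ne_top (b := ENNReal.ofReal 1 * ρ univ)
      · exact ENNReal.mul_ne_top ENNReal.ofReal_ne_top (measure_ne_top ρ univ)
      · calc (∫⁻ x, ENNReal.ofReal (c - (x:ℝ)) ∂ρ) ≤ ∫⁻ _, ENNReal.ofReal 1 ∂ρ := by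
              apply lintegral_mono
              intro x
              apply ENNReal.ofReal_le_ofReal
              linarith [x.2.1, hc.2]
          _ = ENNReal.ofReal 1 * ρ univ := by rw [lintegral_const]
    have hL0 : (∫⁻ x, ENNReal.ofReal (c - (x:ℝ)) ∂ρ) = 0 := by
      rcases (ENNReal.toReal_eq_zero_iff _).mp hL with h | h
      · exact h
      · exact absurd h hLfin
    have hae := (lintegral_eq_zero_iff
      (ENNReal.measurable_ofReal.comp
        (continuous_const.sub continuous_subtype_val).measurable)).mp hL0
    have hSL0 : ρ (SL c) = 0 := by
      rw [Filter.EventuallyEq, ae_iff] at hae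
      apply measure_mono_null _ hae
      intro x hx
      simp only [SL, mem_setOf_eq] at hx
      simp only [mem_setOf_eq, Function.comp_apply, Pi.zero_apply]
      intro h
      simp only [ENNReal.ofReal_eq_zero, Pi.sub_apply] at h
      linarith
    apply Measure.measure_univ_eq_zero.mp
    apply le_antisymm _ (zero_le)
    calc ρ univ = ρ (SL c ∪ (SL c)ᶜ) := by rw [union_compl_self]
      _ ≤ ρ (SL c) + ρ (SL c)ᶜ := measure_union_le _ _
      _ = 0 := by rw [hSL0, hρnull, add_zero]
  have hτ0 : τ = 0 := by
    have hL : ∫ x, ((x:ℝ) - c) ∂τ = 0 := hWτ0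
    have hnn : 0 ≤ᵐ[τ] fun x : I => (x:ℝ) - c := by
      rw [Filter.EventuallyLE, ae_iff]
      apply measure_mono_null _ hτnull
      intro x hx
      simp only [mem_setOf_eq, Pi.zero_apply, not_le] at hx
      simp only [mem_compl_iff, SU, mem_setOf_eq, not_lt]
      linarith
    have hmeas : AEStronglyMeasurable (fun x : I => (x:ℝ) - c) τ :=
      (continuous_subtype_val.sub continuous_const).aestronglyMeasurable
    rw [integral_eq_lintegral_of_nonneg_ae hnn hmeas] at hL
    have hLfin : (∫⁻ x, ENNReal.ofReal ((x:ℝ) - c) ∂τ) ≠ ⊤ := by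
      apply ne_top_of_le_ne_top (b := ENNReal.ofReal 1 * τ univ)
      · exact ENNReal.mul_ne_top ENNReal.ofReal_ne_top (measure_ne_top τ univ)
      · calc (∫⁻ x, ENNReal.ofReal ((x:ℝ) - c) ∂τ) ≤ ∫⁻ _, ENNReal.ofReal 1 ∂τ := by
              apply lintegral_mono
              intro x
              apply ENNReal.ofReal_le_ofReal
              linarith [x.2.2, hc.1]
          _ = ENNReal.ofReal 1 * τ univ := by rw [lintegral_const]
    have hL0 : (∫⁻ x, ENNReal.ofReal ((x:ℝ) - c) ∂τ) = 0 := by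
      rcases (ENNReal.toReal_eq_zero_iff _).mp hL with h | h
      · exact h
      · exact absurd h hLfin
    have hae := (lintegral_eq_zero_iff
      (ENNReal.measurable_ofReal.comp
        (continuous_subtype_val.sub continuous_const).measurable)).mp hL0
    have hSU0 : τ (SU c) = 0 := by
      rw [Filter.EventuallyEq, ae_iff] at hae
      apply measure_mono_null _ hae
      intro x hx
      simp only [SU, mem_setOf_eq] at hx
      simp only [mem_setOf_eq, Function.comp_apply, Pi.zero_apply]
      intro h
      simp only [ENNReal.ofReal_eq_zero, Pi.sub_apply] at h
      linarith
    apply Measure.measure_univ_eq_zero.mp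
    apply le_antisymm _ (zero_le)
    calc τ univ = τ (SU c ∪ (SU c)ᶜ) := by rw [union_compl_self]
      _ ≤ τ (SU c) + τ (SU c)ᶜ := measure_union_le _ _
      _ = 0 := by rw [hSU0, hτnull, add_zero]
  have hSLeq : ν.restrict (SL c) = ν'.restrict (SL c) := by
    rw [← hρadd, hρ0, zero_add]
  have hSUeq : ν.restrict (SU c) = ν'.restrict (SU c) := by
    rw [← hτadd, hτ0, zero_add]
  -- point masses match
  have hPTeq : ν (PT c) = ν' (PT c) := by
    have h1 := congrArg (fun m : Measure I => m univ) (restrict_partition ν c)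
    have h2 := congrArg (fun m : Measure I => m univ) (restrict_partition ν' c)
    simp only [Measure.add_apply] at h1 h2
    rw [Measure.restrict_apply MeasurableSet.univ, Measure.restrict_apply MeasurableSet.univ,
      Measure.restrict_apply MeasurableSet.univ] at h1 h2
    simp only [univ_inter] at h1 h2
    rw [hm, h2] at h1
    have e1 : ν (SL c) = ν' (SL c) := by
      have := congrArg (fun m : Measure I => m univ) hSLeq
      simpa only [Measure.restrict_apply MeasurableSet.univ, univ_inter] using this
    have e2 : ν (SU c) = ν' (SU c) := by
      have := congrArg (fun m : Measure I => m univ) hSUeq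
      simpa only [Measure.restrict_apply MeasurableSet.univ, univ_inter] using this
    rw [e1, e2] at h1
    have hfin1 : ν' (SL c) ≠ ⊤ := measure_ne_top ν' _
    have hfin2 : ν' (SU c) ≠ ⊤ := measure_ne_top ν' _
    -- h1 : ν' (SL c) + ν (PT c) + ν' (SU c) = ν' (SL c) + ν' (PT c) + ν' (SU c)
    have h3 := (ENNReal.add_left_inj hfin2).mp h1
    rw [add_comm (ν' (SL c)) (ν (PT c)), add_comm (ν' (SL c)) (ν' (PT c))] at h3
    exact ((ENNReal.add_left_inj hfin1).mp h3).symm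
  have hPTres : ν.restrict (PT c) = ν'.restrict (PT c) := by
    rw [PT_eq_singleton hc] at hPTeq ⊢
    rw [Measure.restrict_singleton, Measure.restrict_singleton, hPTeq]
  conv_lhs => rw [restrict_partition ν c]
  conv_rhs => rw [restrict_partition ν' c]
  rw [hSLeq, hSUeq, hPTres]

lemma interval_rep {μ ν : Measure I} (hle : ν ≤ μ) {y₁ y₂ : ℝ} (h12 : y₁ ≤ y₂)
    (hrestr : ν.restrict (SU y₁ ∩ SL y₂) = μ.restrict (SU y₁ ∩ SL y₂))
    (hvan : ν (SL y₁ ∪ SU y₂) = 0) {E : Set I} (hE : MeasurableSet E) :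
    ν E = μ (E ∩ (SU y₁ ∩ SL y₂)) + ν (E ∩ (PT y₁ ∪ PT y₂)) := by
  have hmidm : MeasurableSet (SU y₁ ∩ SL y₂) := (measurable_SU y₁).inter (measurable_SL y₂)
  have hendm : MeasurableSet (PT y₁ ∪ PT y₂) := (measurable_PT y₁).union (measurable_PT y₂)
  have houtm : MeasurableSet (SL y₁ ∪ SU y₂) := (measurable_SL y₁).union (measurable_SU y₂)
  have hcover : E = (E ∩ (SL y₁ ∪ SU y₂)) ∪ ((E ∩ (SU y₁ ∩ SL y₂)) ∪ (E ∩ (PT y₁ ∪ PT y₂))) := by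
    ext x
    simp only [SL, SU, PT, mem_union, mem_inter_iff, mem_setOf_eq]
    constructor
    · intro hx
      rcases lt_trichotomy ((x:ℝ)) y₁ with h1 | h1 | h1
      · exact Or.inl ⟨hx, Or.inl h1⟩
      · exact Or.inr (Or.inr ⟨hx, Or.inl h1⟩)
      · rcases lt_trichotomy ((x:ℝ)) y₂ with h2 | h2 | h2
        · exact Or.inr (Or.inl ⟨hx, h1, h2⟩)
        · exact Or.inr (Or.inr ⟨hx, Or.inr h2⟩)
        · exact Or.inl ⟨hx, Or.inr h2⟩
    · rintro (⟨h, -⟩ | ⟨h, -⟩ | ⟨h, -⟩) <;> exact h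
  have hd1 : Disjoint (E ∩ (SL y₁ ∪ SU y₂)) ((E ∩ (SU y₁ ∩ SL y₂)) ∪ (E ∩ (PT y₁ ∪ PT y₂))) := by
    rw [Set.disjoint_left]
    rintro x ⟨-, hout⟩ hx
    simp only [SL, SU, mem_union, mem_setOf_eq] at hout
    rcases hx with ⟨-, hmid⟩ | ⟨-, hpt⟩
    · simp only [SU, SL, mem_inter_iff, mem_setOf_eq] at hmid
      rcases hout with h | h
      · linarith [hmid.1]
      · linarith [hmid.2]
    · simp only [PT, mem_union, mem_setOf_eq] at hpt
      rcases hout with h | h <;> rcases hpt with h' | h' <;> rw [h'] at h <;> linarith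
  have hd2 : Disjoint (E ∩ (SU y₁ ∩ SL y₂)) (E ∩ (PT y₁ ∪ PT y₂)) := by
    rw [Set.disjoint_left]
    rintro x ⟨-, hmid⟩ ⟨-, hpt⟩
    simp only [SL, SU, PT, mem_union, mem_inter_iff, mem_setOf_eq] at hmid hpt
    rcases hpt with h | h <;> rw [h] at hmid <;> [exact lt_irrefl _ hmid.1;
      exact lt_irrefl _ hmid.2]
  have h0 : ν (E ∩ (SL y₁ ∪ SU y₂)) = 0 := measure_mono_null inter_subset_right hvan
  have hmid_eq : ν (E ∩ (SU y₁ ∩ SL y₂)) = μ (E ∩ (SU y₁ ∩ SL y₂)) := by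
    have h1 := congrArg (fun m : Measure I => m E) hrestr
    simpa only [Measure.restrict_apply hE] using h1
  conv_lhs => rw [hcover]
  rw [measure_union hd1 ((hE.inter hmidm).union (hE.inter hendm)), h0, zero_add,
    measure_union hd2 (hE.inter hendm), hmid_eq]

lemma interval_le_aux {μ ν ν' : Measure I} (hle : ν ≤ μ) (hle' : ν' ≤ μ)
    {y₁ y₂ y₁' y₂' : ℝ} (h12 : y₁ ≤ y₂) (h12' : y₁' ≤ y₂')
    (hrestr : ν.restrict (SU y₁ ∩ SL y₂) = μ.restrict (SU y₁ ∩ SL y₂))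
    (hvan : ν (SL y₁ ∪ SU y₂) = 0)
    (hrestr' : ν'.restrict (SU y₁' ∩ SL y₂') = μ.restrict (SU y₁' ∩ SL y₂'))
    (hvan' : ν' (SL y₁' ∪ SU y₂') = 0)
    {H : Set I} (hH : MeasurableSet H)
    (hsub : H ∩ ((SU y₁ ∩ SL y₂) ∪ (PT y₁ ∪ PT y₂)) ⊆ SU y₁' ∩ SL y₂') :
    ν.restrict H ≤ ν'.restrict H := by
  rw [Measure.le_iff]
  intro E hE
  rw [Measure.restrict_apply hE, Measure.restrict_apply hE]
  set G := E ∩ H with hGdef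
  have hG : MeasurableSet G := hE.inter hH
  have hGH : G ⊆ H := inter_subset_right
  rw [interval_rep hle h12 hrestr hvan hG, interval_rep hle' h12' hrestr' hvan' hG]
  have hd : Disjoint (G ∩ (SU y₁ ∩ SL y₂)) (G ∩ (PT y₁ ∪ PT y₂)) := by
    rw [Set.disjoint_left]
    rintro x ⟨-, hmid⟩ ⟨-, hpt⟩
    simp only [SL, SU, PT, mem_union, mem_inter_iff, mem_setOf_eq] at hmid hpt
    rcases hpt with h | h <;> rw [h] at hmid <;> [exact lt_irrefl _ hmid.1;
      exact lt_irrefl _ hmid.2]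
  calc μ (G ∩ (SU y₁ ∩ SL y₂)) + ν (G ∩ (PT y₁ ∪ PT y₂))
      ≤ μ (G ∩ (SU y₁ ∩ SL y₂)) + μ (G ∩ (PT y₁ ∪ PT y₂)) := by
        gcongr
    _ = μ ((G ∩ (SU y₁ ∩ SL y₂)) ∪ (G ∩ (PT y₁ ∪ PT y₂))) :=
        (measure_union hd (hG.inter ((measurable_PT y₁).union (measurable_PT y₂)))).symm
    _ ≤ μ (G ∩ (SU y₁' ∩ SL y₂')) := by
        apply measure_mono
        rintro x (⟨hxG, hx⟩ | ⟨hxG, hx⟩)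
        · exact ⟨hxG, hsub ⟨hGH hxG, Or.inl hx⟩⟩
        · exact ⟨hxG, hsub ⟨hGH hxG, Or.inr hx⟩⟩
    _ ≤ μ (G ∩ (SU y₁' ∩ SL y₂')) + ν' (G ∩ (PT y₁' ∪ PT y₂')) := le_add_right le_rfl

lemma restrict_zero_of_null {ν : Measure I} {S : Set I} (h : ν S = 0) : ν.restrict S = 0 :=
  Measure.restrict_eq_zero.mpr h

lemma interval_le_atom {μ ν ν' : Measure I} (hle : ν ≤ μ) (hle' : ν' ≤ μ)
    {y₁ y₂ : ℝ} (h12 : y₁ ≤ y₂) (hy : y₁ ∈ Icc (0:ℝ) 1)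
    (hrestr : ν.restrict (SU y₁ ∩ SL y₂) = μ.restrict (SU y₁ ∩ SL y₂))
    (hvan : ν (SL y₁ ∪ SU y₂) = 0)
    (hrestr' : ν'.restrict (SU y₁ ∩ SL y₂) = μ.restrict (SU y₁ ∩ SL y₂))
    (hvan' : ν' (SL y₁ ∪ SU y₂) = 0)
    (hcomp : ν (PT y₁) ≤ ν' (PT y₁)) :
    ν.restrict (SL y₂) ≤ ν'.restrict (SL y₂) := by
  rw [Measure.le_iff]
  intro E hE
  rw [Measure.restrict_apply hE, Measure.restrict_apply hE]
  set G := E ∩ SL y₂ with hGdef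
  have hG : MeasurableSet G := hE.inter (measurable_SL y₂)
  rw [interval_rep hle h12 hrestr hvan hG, interval_rep hle' h12 hrestr' hvan' hG]
  apply add_le_add le_rfl
  have hGP : G ∩ (PT y₁ ∪ PT y₂) = G ∩ PT y₁ := by
    ext x
    simp only [PT, SL, mem_inter_iff, mem_union, mem_setOf_eq]
    constructor
    · rintro ⟨hxG, h | h⟩
      · exact ⟨hxG, h⟩
      · exfalso
        have hx2 : (x:ℝ) < y₂ := hxG.2
        rw [h] at hx2
        exact lt_irrefl _ hx2
    · rintro ⟨hxG, h⟩
      exact ⟨hxG, Or.inl h⟩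
  rw [hGP]
  by_cases hp : pI y₁ ∈ G
  · have hGP1 : G ∩ PT y₁ = PT y₁ := by
      rw [PT_eq_singleton hy]
      exact inter_eq_self_of_subset_right (singleton_subset_iff.mpr hp)
    rw [hGP1]
    exact hcomp
  · have hGP1 : G ∩ PT y₁ = ∅ := by
      rw [PT_eq_singleton hy, ← disjoint_iff_inter_eq_empty, Set.disjoint_singleton_right]
      exact hp
    rw [hGP1, measure_empty]
    exact zero_le

lemma interval_unique_key {μ ν ν' : Measure I} [IsProbabilityMeasure μ]
    (hle : ν ≤ μ) (hle' : ν' ≤ μ)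
    {y₁ y₂ y₁' y₂' : ℝ} (hy0 : 0 ≤ y₁) (h12 : y₁ ≤ y₂) (hy2 : y₂ ≤ 1)
    (hy0' : 0 ≤ y₁') (h12' : y₁' ≤ y₂') (hy2' : y₂' ≤ 1)
    (hrestr : ν.restrict (SU y₁ ∩ SL y₂) = μ.restrict (SU y₁ ∩ SL y₂))
    (hvan : ν (SL y₁ ∪ SU y₂) = 0)
    (hrestr' : ν'.restrict (SU y₁' ∩ SL y₂') = μ.restrict (SU y₁' ∩ SL y₂'))
    (hvan' : ν' (SL y₁' ∪ SU y₂') = 0)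
    (hm : ν univ = ν' univ) (hi : intg ν = intg ν') (hy : y₁ ≤ y₁') : ν = ν' := by
  rcases lt_trichotomy y₂ y₂' with hc | hc | hc
  · -- y₂ < y₂' : crossing at y₁'
    apply master hle hle' hm hi (c := y₁') ⟨hy0', le_trans h12' hy2'⟩
    · rw [restrict_zero_of_null (measure_mono_null subset_union_left hvan')]
      exact Measure.zero_le _
    · apply interval_le_aux hle hle' h12 h12' hrestr hvan hrestr' hvan' (measurable_SU y₁')
      rintro x ⟨hxH, hx⟩
      simp only [SU, mem_setOf_eq] at hxH
      rcases hx with ⟨hx1, hx2⟩ | hx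
      · simp only [SU, mem_setOf_eq] at hx1
        simp only [SL, mem_setOf_eq] at hx2
        exact ⟨hxH, lt_trans hx2 hc⟩
      · rcases hx with h | h <;> simp only [PT, mem_setOf_eq] at h
        · exact absurd hxH (by rw [h]; linarith)
        · refine ⟨hxH, ?_⟩
          simp only [SL, mem_setOf_eq]
          rw [h]; exact hc
  · -- y₂ = y₂'
    rcases eq_or_lt_of_le hy with heq | hlt
    · -- y₁ = y₁' : atom comparison at y₁
      subst heq
      subst hc
      rcases le_total (ν (PT y₁)) (ν' (PT y₁)) with hcomp | hcomp
      · refine (master hle' hle hm.symm hi.symm (c := y₂)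
          ⟨le_trans hy0 h12, hy2⟩ ?_ ?_).symm
        · exact interval_le_atom hle hle' h12 ⟨hy0, le_trans h12 hy2⟩ hrestr hvan
            hrestr' hvan' hcomp
        · rw [restrict_zero_of_null (measure_mono_null subset_union_right hvan')]
          exact Measure.zero_le _
      · apply master hle hle' hm hi (c := y₂) ⟨le_trans hy0 h12, hy2⟩
        · exact interval_le_atom hle' hle h12 ⟨hy0, le_trans h12 hy2⟩ hrestr' hvan'
            hrestr hvan hcomp
        · rw [restrict_zero_of_null (measure_mono_null subset_union_right hvan)]
          exact Measure.zero_le _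
    · -- y₁ < y₁' : nested, crossing at y₂ = y₂'
      subst hc
      apply master hle hle' hm hi (c := y₂) ⟨le_trans hy0 h12, hy2⟩
      · apply interval_le_aux hle' hle h12' h12 hrestr' hvan' hrestr hvan (measurable_SL y₂)
        rintro x ⟨hxH, hx⟩
        simp only [SL, mem_setOf_eq] at hxH
        rcases hx with ⟨hx1, hx2⟩ | hx
        · simp only [SU, mem_setOf_eq] at hx1
          exact ⟨lt_trans hlt hx1, hxH⟩
        · rcases hx with h | h <;> simp only [PT, mem_setOf_eq] at h
          · refine ⟨?_, hxH⟩
            simp only [SU, mem_setOf_eq]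
            rw [h]; exact hlt
          · exact absurd hxH (by rw [h]; exact lt_irrefl _)
      · rw [restrict_zero_of_null (measure_mono_null subset_union_right hvan)]
        exact Measure.zero_le _
  · -- y₂' < y₂ : crossing at y₁
    refine (master hle' hle hm.symm hi.symm (c := y₁) ⟨hy0, le_trans h12 hy2⟩ ?_ ?_).symm
    · rw [restrict_zero_of_null (measure_mono_null subset_union_left hvan)]
      exact Measure.zero_le _
    · apply interval_le_aux hle' hle h12' h12 hrestr' hvan' hrestr hvan (measurable_SU y₁)
      rintro x ⟨hxH, hx⟩
      simp only [SU, mem_setOf_eq] at hxH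
      rcases hx with ⟨hx1, hx2⟩ | hx
      · simp only [SL, mem_setOf_eq] at hx2
        exact ⟨hxH, lt_trans hx2 hc⟩
      · rcases hx with h | h <;> simp only [PT, mem_setOf_eq] at h
        · refine ⟨hxH, ?_⟩
          simp only [SL, mem_setOf_eq]
          rw [h]; linarith
        · refine ⟨hxH, ?_⟩
          simp only [SL, mem_setOf_eq]
          rw [h]; exact hc

lemma interval_unique (l : ℝ) (μ₁ : Measure I) [IsProbabilityMeasure μ₁] (β : ℝ) (hβ0 : 0 < β)
    {ν ν' : Measure I} (h : IsIntervalMeasure l μ₁ ν) (htm : tmass ν = β)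
    (h' : IsIntervalMeasure l μ₁ ν') (htm' : tmass ν' = β) : ν = ν' := by
  obtain ⟨hle, hbary, y₁, y₂, hy0, h12, hy2, hrestr, hvan⟩ := h
  obtain ⟨hle', hbary', y₁', y₂', hy0', h12', hy2', hrestr', hvan'⟩ := h'
  have hfin : ν univ ≠ ⊤ := ne_top_of_le_ne_top (measure_ne_top μ₁ univ) (hle univ)
  have hfin' : ν' univ ≠ ⊤ := ne_top_of_le_ne_top (measure_ne_top μ₁ univ) (hle' univ)
  have hm : ν univ = ν' univ := by
    rw [← ENNReal.ofReal_toReal hfin, ← ENNReal.ofReal_toReal hfin']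
    rw [show (ν univ).toReal = β from htm, show (ν' univ).toReal = β from htm']
  have hintg : intg ν = l * β := by
    rw [bary, htm, div_eq_iff (ne_of_gt hβ0)] at hbary
    linarith [hbary]
  have hintg' : intg ν' = l * β := by
    rw [bary, htm', div_eq_iff (ne_of_gt hβ0)] at hbary'
    linarith [hbary']
  have hi : intg ν = intg ν' := by rw [hintg, hintg']
  have hr : ν.restrict (SU y₁ ∩ SL y₂) = μ₁.restrict (SU y₁ ∩ SL y₂) := hrestr
  have hv : ν (SL y₁ ∪ SU y₂) = 0 := hvan
  have hr' : ν'.restrict (SU y₁' ∩ SL y₂') = μ₁.restrict (SU y₁' ∩ SL y₂') := hrestr'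
  have hv' : ν' (SL y₁' ∪ SU y₂') = 0 := hvan'
  rcases le_total y₁ y₁' with hy | hy
  · exact interval_unique_key hle hle' hy0 h12 hy2 hy0' h12' hy2' hr hv hr' hv' hm hi hy
  · exact (interval_unique_key hle' hle hy0' h12' hy2' hy0 h12 hy2 hr' hv' hr hv
      hm.symm hi.symm hy).symm

/-- existence and uniqueness of the interval measure of any given mass
`β ∈ (0, g(μ₁)]`. -/
theorem interval_exists_unique
    (l : ℝ) (hl : l ∈ Set.Ioo (0:ℝ) 1)
    (μ₁ : Measure I) (hμ₁ : IsProbabilityMeasure μ₁) (hbar : bary μ₁ < l)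
    (hg : greedy l μ₁ ≠ 0) (hα : 0 < gmass l μ₁) :
    ∀ β : ℝ, 0 < β → β ≤ gmass l μ₁ →
      (∃ ν : Measure I, IsIntervalMeasure l μ₁ ν ∧ tmass ν = β) ∧
      (∀ ν ν' : Measure I, IsIntervalMeasure l μ₁ ν → tmass ν = β →
        IsIntervalMeasure l μ₁ ν' → tmass ν' = β → ν = ν') := by
  haveI := hμ₁
  intro β hβ0 hβα
  constructor
  · exact exists_interval l hl μ₁ hμ₁ hbar hg hα β hβ0 hβα
  · intro ν ν' h1 h2 h3 h4
    exact interval_unique l μ₁ β hβ0 h1 h2 h3 h4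

end Persuasion
end
end

section
/- Fix a threshold l ∈ (0,1) and let μ₁ be a probability measure on [0,1]. Let ν̃ be an interval measure for μ₁ (so ν̃ ≤ μ₁ and its barycenter is l), and let ν' ≤ μ₁ be any measure with |ν'| = |ν̃| > 0 and barycenter ν̄' = l. Then ν̃ ⪯_B ν'. -/
open MeasureTheory Set
open scoped ENNReal unitInterval Classical

noncomputable section

namespace Persuasion

lemma integrableI {g : I → ℝ} (hg : Continuous g) (μ : Measure I) [IsFiniteMeasure μ] :
    Integrable g μ :=
  hg.integrable_of_hasCompactSupport (HasCompactSupport.of_compactSpace g)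

lemma cont_comp {f : ℝ → ℝ} (hf : ContinuousOn f (Icc 0 1)) :
    Continuous (fun x : I => f (x : ℝ)) :=
  hf.comp_continuous continuous_subtype_val (fun x => x.2)

lemma integral_affine (μ : Measure I) [IsFiniteMeasure μ] (a b : ℝ) :
    ∫ x : I, (a + b * (x : ℝ)) ∂μ = a * (μ univ).toReal + b * ∫ x : I, (x : ℝ) ∂μ := by
  rw [integral_add (integrable_const a) ((integrableI continuous_subtype_val μ).const_mul b),
    integral_const, integral_const_mul]
  simp [smul_eq_mul, mul_comm, measureReal_def]

lemma chord_below {f : ℝ → ℝ} (hf : ConcaveOn ℝ (Icc (0:ℝ) 1) f)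
    {y₁ y₂ : ℝ} (h0 : 0 ≤ y₁) (h12 : y₁ < y₂) (h21 : y₂ ≤ 1) :
    ∀ x ∈ Icc y₁ y₂, (f y₂ - f y₁) * (x - y₁) ≤ (f x - f y₁) * (y₂ - y₁) := by
  intro x hx
  rcases eq_or_lt_of_le hx.1 with h1 | h1
  · exact le_of_eq (by rw [← h1]; ring)
  rcases eq_or_lt_of_le hx.2 with h2 | h2
  · exact le_of_eq (by rw [h2])
  have key := hf.slope_anti_adjacent (x := y₁) (y := x) (z := y₂)
    ⟨h0, by linarith⟩ ⟨by linarith, h21⟩ h1 h2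
  rw [div_le_div_iff₀ (by linarith) (by linarith)] at key
  nlinarith [key]

lemma exists_affine {f : ℝ → ℝ} (hf : ConcaveOn ℝ (Icc (0:ℝ) 1) f)
    {y₁ y₂ : ℝ} (h0 : 0 ≤ y₁) (h21 : y₂ ≤ 1)
    (hcase : y₁ < y₂ ∨ (y₁ = y₂ ∧ 0 < y₁ ∧ y₂ < 1)) :
    ∃ a b : ℝ, (∀ x ∈ Icc y₁ y₂, a + b * x ≤ f x) ∧
      (∀ x ∈ Icc (0:ℝ) 1, x ∉ Ioo y₁ y₂ → f x ≤ a + b * x) := by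
  rcases hcase with h12 | ⟨heq, hc0, hc1⟩
  · -- chord case
    set b : ℝ := (f y₂ - f y₁) / (y₂ - y₁) with hb
    have hbmul : b * (y₂ - y₁) = f y₂ - f y₁ := by
      rw [hb, div_mul_cancel₀ _ (by linarith : y₂ - y₁ ≠ 0)]
    refine ⟨f y₁ - b * y₁, b, ?_, ?_⟩
    · intro x hx
      have hc := chord_below hf h0 h12 h21 x hx
      have hd : b * (x - y₁) ≤ f x - f y₁ := by
        rw [hb, div_mul_eq_mul_div, div_le_iff₀ (by linarith)]
        nlinarith [hc]
      nlinarith [hd]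
    · intro x hx hnot
      simp only [mem_Ioo, not_and_or, not_lt] at hnot
      rcases hnot with hxle | hxge
      · rcases eq_or_lt_of_le hxle with he | hlt
        · rw [he]; nlinarith []
        · have key := hf.slope_anti_adjacent (x := x) (y := y₁) (z := y₂)
            ⟨hx.1, hx.2⟩ ⟨by linarith, h21⟩ hlt h12
          rw [← hb, le_div_iff₀ (by linarith)] at key
          nlinarith [key]
      · rcases eq_or_lt_of_le hxge with he | hlt
        · rw [← he]; nlinarith [hbmul]
        · have key := hf.slope_anti_adjacent (x := y₁) (y := y₂) (z := x)
            ⟨h0, by linarith⟩ ⟨hx.1, hx.2⟩ h12 hlt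
          rw [← hb, div_le_iff₀ (by linarith)] at key
          nlinarith [key, hbmul]
  · -- degenerate case: y₁ = y₂ ∈ (0,1), supporting line
    subst heq
    set B : Set ℝ := (fun z => (f z - f y₁) / (z - y₁)) '' Ioc y₁ 1 with hB
    have hne : B.Nonempty := ⟨_, ⟨1, ⟨hc1, le_refl 1⟩, rfl⟩⟩
    have hbdd : BddAbove B := by
      refine ⟨(f y₁ - f 0) / (y₁ - 0), ?_⟩
      rintro s ⟨z, hz, rfl⟩
      exact hf.slope_anti_adjacent ⟨le_refl 0, zero_le_one⟩
        ⟨by linarith [hz.1], hz.2⟩ hc0 hz.1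
    set b : ℝ := sSup B with hb
    refine ⟨f y₁ - b * y₁, b, ?_, ?_⟩
    · intro x hx
      have : x = y₁ := le_antisymm hx.2 hx.1
      rw [this]; nlinarith []
    · intro x hx _
      rcases lt_trichotomy x y₁ with hlt | he | hlt
      · have hub : b ≤ (f y₁ - f x) / (y₁ - x) := by
          refine csSup_le hne ?_
          rintro s ⟨z, hz, rfl⟩
          exact hf.slope_anti_adjacent ⟨hx.1, hx.2⟩ ⟨by linarith [hz.1], hz.2⟩ hlt hz.1
        rw [le_div_iff₀ (by linarith)] at hub
        nlinarith [hub]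
      · rw [he]; nlinarith []
      · have hmem : (f x - f y₁) / (x - y₁) ∈ B := ⟨x, ⟨hlt, hx.2⟩, rfl⟩
        have := le_csSup hbdd hmem
        rw [div_le_iff₀ (by linarith)] at this
        nlinarith [this]



/-- interval measures are Blackwell-minimal among submeasures of `μ₁`
with the same mass and barycenter `l`. -/
theorem interval_blackwell_minimal
    (l : ℝ) (hl : l ∈ Set.Ioo (0:ℝ) 1)
    (μ₁ : Measure I) (hμ₁ : IsProbabilityMeasure μ₁)
    (ν₀ ν' : Measure I) (hν₀ : IsIntervalMeasure l μ₁ ν₀)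
    (hν' : ν' ≤ μ₁) (hmass : tmass ν' = tmass ν₀) (hpos : 0 < tmass ν₀)
    (hbar : bary ν' = l) :
    BLE ν₀ ν' := by
  obtain ⟨hle₀, hbar₀, y₁, y₂, hy10, hy12, hy21, hres, hout⟩ := hν₀
  intro f hfc hfcc
  have hfin₀ : IsFiniteMeasure ν₀ := isFiniteMeasure_of_le μ₁ hle₀
  have hfin' : IsFiniteMeasure ν' := isFiniteMeasure_of_le μ₁ hν'
  -- moments
  have hiν₀ : intg ν₀ = l * tmass ν₀ := by
    rw [bary, div_eq_iff (ne_of_gt hpos)] at hbar₀; linarith [hbar₀]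
  have hiν' : intg ν' = l * tmass ν₀ := by
    rw [bary, hmass, div_eq_iff (ne_of_gt hpos)] at hbar; linarith [hbar]
  -- the decomposition
  set S : Set I := (fun x : I => (x : ℝ)) ⁻¹' (Ioo y₁ y₂) with hSdef
  have hSm : MeasurableSet S := measurable_subtype_coe measurableSet_Ioo
  set T : Set I := (fun x : I => (x : ℝ)) ⁻¹' (Icc y₁ y₂) with hTdef
  set κ : Measure I := ν'.restrict S with hκdef
  have hfinκ : IsFiniteMeasure κ := by rw [hκdef]; infer_instance
  have hres' : ν₀.restrict S = μ₁.restrict S := hres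
  have hκν₀ : κ ≤ ν₀ :=
    le_trans (le_trans (Measure.restrict_mono (subset_refl S) hν') (le_of_eq hres'.symm))
      Measure.restrict_le_self
  set η : Measure I := ν₀ - κ with hηdef
  set η' : Measure I := ν'.restrict Sᶜ with hη'def
  have hfinη : IsFiniteMeasure η := isFiniteMeasure_of_le ν₀ Measure.sub_le
  have hfinη' : IsFiniteMeasure η' := by rw [hη'def]; infer_instance
  have hsplit₀ : η + κ = ν₀ := Measure.sub_add_cancel_of_le hκν₀
  have hsplit' : κ + η' = ν' := Measure.restrict_add_restrict_compl hSm
  -- integrability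
  have hfint : ∀ (μ : Measure I) [IsFiniteMeasure μ], Integrable (fun x : I => f (x : ℝ)) μ :=
    fun μ _ => integrableI (cont_comp hfc) μ
  have hidint : ∀ (μ : Measure I) [IsFiniteMeasure μ], Integrable (fun x : I => (x : ℝ)) μ :=
    fun μ _ => integrableI continuous_subtype_val μ
  -- splits of integrals and masses
  have hfsplit₀ : ∫ x, f (x : ℝ) ∂ν₀ = (∫ x, f (x : ℝ) ∂η) + ∫ x, f (x : ℝ) ∂κ := by
    rw [← hsplit₀, integral_add_measure (hfint η) (hfint κ)]
  have hfsplit' : ∫ x, f (x : ℝ) ∂ν' = (∫ x, f (x : ℝ) ∂κ) + ∫ x, f (x : ℝ) ∂η' := by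
    rw [← hsplit', integral_add_measure (hfint κ) (hfint η')]
  have hisplit₀ : intg ν₀ = (∫ x, (x : ℝ) ∂η) + ∫ x, (x : ℝ) ∂κ := by
    rw [intg, ← hsplit₀, integral_add_measure (hidint η) (hidint κ)]
  have hisplit' : intg ν' = (∫ x, (x : ℝ) ∂κ) + ∫ x, (x : ℝ) ∂η' := by
    rw [intg, ← hsplit', integral_add_measure (hidint κ) (hidint η')]
  have hmsplit₀ : tmass ν₀ = (η univ).toReal + (κ univ).toReal := by
    rw [tmass, ← hsplit₀, Measure.add_apply,
      ENNReal.toReal_add (measure_ne_top η univ) (measure_ne_top κ univ)]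
  have hmsplit' : tmass ν' = (κ univ).toReal + (η' univ).toReal := by
    rw [tmass, ← hsplit', Measure.add_apply,
      ENNReal.toReal_add (measure_ne_top κ univ) (measure_ne_top η' univ)]
  have hMeq : (η univ).toReal = (η' univ).toReal := by
    rw [hmass] at hmsplit'; linarith
  have hIeq : ∫ x, (x : ℝ) ∂η = ∫ x, (x : ℝ) ∂η' := by
    rw [hiν₀] at hisplit₀; rw [hiν'] at hisplit'; linarith
  -- support facts
  have hTc : Tᶜ = {x : I | (x : ℝ) < y₁ ∨ y₂ < (x : ℝ)} := by
    ext x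
    simp only [mem_compl_iff, hTdef, mem_preimage, mem_Icc, mem_setOf_eq, not_and_or, not_le]
  have hηT : η Tᶜ = 0 := by
    refine le_antisymm ?_ zero_le
    calc η Tᶜ ≤ ν₀ Tᶜ := Measure.sub_le Tᶜ
      _ = 0 := by rw [hTc]; exact hout
  have hη'S : η' S = 0 := by
    rw [hη'def, Measure.restrict_apply hSm]
    simp
  -- degenerate total mass case
  rw [hmass]
  by_cases hMz : η univ = 0
  · have hη0 : η = 0 := Measure.measure_univ_eq_zero.mp hMz
    have hη'0 : η' = 0 := by
      refine Measure.measure_univ_eq_zero.mp ?_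
      have : (η' univ).toReal = 0 := by rw [← hMeq, hMz]; simp
      exact (ENNReal.toReal_eq_zero_iff _).mp this |>.resolve_right (measure_ne_top η' univ)
    have : ν' = ν₀ := by rw [← hsplit₀, ← hsplit', hη0, hη'0, zero_add, add_zero]
    rw [this]
  -- main case
  have hMpos : 0 < (η univ).toReal :=
    ENNReal.toReal_pos hMz (measure_ne_top η univ)
  have hcase : y₁ < y₂ ∨ (y₁ = y₂ ∧ 0 < y₁ ∧ y₂ < 1) := by
    rcases lt_or_eq_of_le hy12 with h12 | h12
    · exact Or.inl h12
    · right
      -- η is concentrated at y₁ and κ = 0, so y₁ = l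
      have hSempty : S = ∅ := by
        rw [hSdef, ← h12, Ioo_self, preimage_empty]
      have hκ0 : κ = 0 := by rw [hκdef, hSempty, Measure.restrict_empty]
      have hae : ∀ᵐ (x : I) ∂η, (x : ℝ) = y₁ := by
        rw [ae_iff]
        refine measure_mono_null ?_ hηT
        intro x hx
        simp only [mem_setOf_eq] at hx
        simp only [mem_compl_iff, hTdef, mem_preimage, mem_Icc, ← h12, not_and_or, not_le]
        rcases lt_or_gt_of_ne hx with h | h
        · exact Or.inl h
        · exact Or.inr h
      have hI : ∫ x, (x : ℝ) ∂η = y₁ * (η univ).toReal := by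
        have hae2 : (fun x : I => (x : ℝ)) =ᵐ[η] (fun _ => y₁) := hae
        rw [integral_congr_ae hae2, integral_const, smul_eq_mul, mul_comm, measureReal_def]
      have hM : tmass ν₀ = (η univ).toReal := by
        rw [hmsplit₀, hκ0]; simp
      have hIκ : ∫ x, (x : ℝ) ∂κ = 0 := by rw [hκ0]; simp
      have : y₁ * (η univ).toReal = l * (η univ).toReal := by
        rw [← hI]
        rw [hiν₀, hM] at hisplit₀
        rw [hIκ] at hisplit₀
        linarith
      have hyl : y₁ = l := by
        have := mul_right_cancel₀ (ne_of_gt hMpos) this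
        exact this
      refine ⟨h12, ?_, ?_⟩
      · rw [hyl]; exact hl.1
      · rw [← h12, hyl]; exact hl.2
  obtain ⟨a, b, hL1, hL2⟩ := exists_affine hfcc hy10 hy21 hcase
  -- a.e. comparisons
  have hae_η : ∀ᵐ (x : I) ∂η, a + b * (x : ℝ) ≤ f (x : ℝ) := by
    rw [ae_iff]
    refine measure_mono_null ?_ hηT
    intro x hx
    simp only [mem_setOf_eq] at hx
    simp only [mem_compl_iff, hTdef, mem_preimage]
    intro hmem
    exact hx (hL1 _ hmem)
  have hae_η' : ∀ᵐ (x : I) ∂η', f (x : ℝ) ≤ a + b * (x : ℝ) := by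
    rw [ae_iff]
    refine measure_mono_null ?_ hη'S
    intro x hx
    simp only [mem_setOf_eq] at hx
    simp only [hSdef, mem_preimage]
    by_contra hnot
    exact hx (hL2 _ ⟨x.2.1, x.2.2⟩ hnot)
  have haff : Integrable (fun x : I => a + b * (x : ℝ)) η ∧
      Integrable (fun x : I => a + b * (x : ℝ)) η' :=
    ⟨integrableI (continuous_const.add (continuous_const.mul continuous_subtype_val)) η, integrableI (continuous_const.add (continuous_const.mul continuous_subtype_val)) η'⟩
  have h1 : ∫ x, f (x : ℝ) ∂η' ≤ ∫ x, (a + b * (x : ℝ)) ∂η' :=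
    integral_mono_ae (hfint η') haff.2 hae_η'
  have h2 : ∫ x, (a + b * (x : ℝ)) ∂η ≤ ∫ x, f (x : ℝ) ∂η :=
    integral_mono_ae haff.1 (hfint η) hae_η
  have h3 : ∫ x, (a + b * (x : ℝ)) ∂η' = ∫ x, (a + b * (x : ℝ)) ∂η := by
    rw [integral_affine, integral_affine, hMeq, hIeq]
  have key : ∫ x, f (x : ℝ) ∂ν' ≤ ∫ x, f (x : ℝ) ∂ν₀ := by
    rw [hfsplit₀, hfsplit']
    linarith
  exact (div_le_div_iff_of_pos_right hpos).mpr key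

end Persuasion
end
end

section
/- Let Γ ⊆ [0,1] be a countable discrete set and let ψ, ψ', μ, μ' be measures supported on Γ with ψ ⪯_D μ and ψ' ⪯_D μ'. Then ψ + ψ' ⪯_D μ + μ'. -/
open MeasureTheory Set
open scoped ENNReal unitInterval Classical

noncomputable section

namespace Persuasion

/-- The mixing weight. -/
def mixF (a a' : Measure I) : I → ℝ≥0∞ := fun x => min (a.rnDeriv (a + a') x) 1

lemma mixF_le_one (a a' : Measure I) (x : I) : mixF a a' x ≤ 1 := min_le_right _ _

lemma mixF_meas (a a' : Measure I) : Measurable (mixF a a') :=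
  (Measure.measurable_rnDeriv _ _).min measurable_const

lemma mixF_ae (a a' : Measure I) [IsFiniteMeasure a] [IsFiniteMeasure a'] :
    mixF a a' =ᵐ[a + a'] a.rnDeriv (a + a') ∧
    (fun x => 1 - mixF a a' x) =ᵐ[a + a'] a'.rnDeriv (a + a') := by
  have : IsFiniteMeasure (a + a') := inferInstance
  have : SigmaFinite (a + a') := inferInstance
  have hadd := Measure.rnDeriv_add a a' (a + a')
  have hself := Measure.rnDeriv_self (a + a')
  constructor
  · filter_upwards [hadd, hself] with x h1 h2
    have : a.rnDeriv (a + a') x + a'.rnDeriv (a + a') x = 1 := by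
      rw [← Pi.add_apply, ← h1, h2]
    have hle : a.rnDeriv (a + a') x ≤ 1 := le_trans (le_add_right le_rfl) this.le
    simpa [mixF] using min_eq_left hle
  · filter_upwards [hadd, hself] with x h1 h2
    have hsum : a.rnDeriv (a + a') x + a'.rnDeriv (a + a') x = 1 := by
      rw [← Pi.add_apply, ← h1, h2]
    have hle : a.rnDeriv (a + a') x ≤ 1 := le_trans (le_add_right le_rfl) hsum.le
    show 1 - min (a.rnDeriv (a + a') x) 1 = a'.rnDeriv (a + a') x
    rw [min_eq_left hle, ← hsum, ENNReal.add_sub_cancel_left]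
    exact (lt_of_le_of_lt hle ENNReal.one_lt_top).ne

/-- The mixed kernel. -/
def mixK (a a' : Measure I) (K K' : I → Measure I) : I → Measure I :=
  fun x => mixF a a' x • K x + (1 - mixF a a' x) • K' x

lemma mixK_apply (a a' : Measure I) (K K' : I → Measure I) (x : I) (s : Set I) :
    mixK a a' K K' x s = mixF a a' x * K x s + (1 - mixF a a' x) * K' x s := by
  simp [mixK, Measure.add_apply, Measure.smul_apply, smul_eq_mul]

lemma mixK_meas (a a' : Measure I) {K K' : I → Measure I}
    (hK : Measurable K) (hK' : Measurable K') : Measurable (mixK a a' K K') := by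
  apply Measure.measurable_of_measurable_coe
  intro s hs
  simp only [mixK_apply]
  exact ((mixF_meas a a').mul ((Measure.measurable_coe hs).comp hK)).add
    ((measurable_const.sub (mixF_meas a a')).mul ((Measure.measurable_coe hs).comp hK'))

lemma mixK_prob (a a' : Measure I) (K K' : I → Measure I)
    (hK : ∀ x, IsProbabilityMeasure (K x)) (hK' : ∀ x, IsProbabilityMeasure (K' x)) (x : I) :
    IsProbabilityMeasure (mixK a a' K K' x) := by
  constructor
  rw [mixK_apply, (hK x).measure_univ, (hK' x).measure_univ, mul_one, mul_one]
  exact add_tsub_cancel_of_le (mixF_le_one a a' x)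

lemma bind_mixK (a a' : Measure I) [IsFiniteMeasure a] [IsFiniteMeasure a']
    {K K' : I → Measure I} (hK : Measurable K) (hK' : Measurable K') :
    (a + a').bind (mixK a a' K K') = a.bind K + a'.bind K' := by
  have : SigmaFinite (a + a') := inferInstance
  have hac : a ≪ a + a' := (Measure.le_add_right le_rfl).absolutelyContinuous
  have hac' : a' ≪ a + a' := (Measure.le_add_left le_rfl).absolutelyContinuous
  obtain ⟨hF, hF'⟩ := mixF_ae a a'
  ext s hs
  rw [Measure.bind_apply hs (mixK_meas a a' hK hK').aemeasurable, Measure.add_apply,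
    Measure.bind_apply hs hK.aemeasurable, Measure.bind_apply hs hK'.aemeasurable]
  simp only [mixK_apply]
  have hg : Measurable fun x => K x s := (Measure.measurable_coe hs).comp hK
  have hg' : Measurable fun x => K' x s := (Measure.measurable_coe hs).comp hK'
  rw [lintegral_add_left (f := fun x => mixF a a' x * K x s) ((mixF_meas a a').mul hg)]
  congr 1
  · calc ∫⁻ x, mixF a a' x * K x s ∂(a + a')
        = ∫⁻ x, a.rnDeriv (a + a') x * K x s ∂(a + a') := by
          apply lintegral_congr_ae; filter_upwards [hF] with x hx; rw [hx]
      _ = ∫⁻ x, K x s ∂((a + a').withDensity (a.rnDeriv (a + a'))) := by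
          rw [lintegral_withDensity_eq_lintegral_mul _ (Measure.measurable_rnDeriv _ _) hg]
          rfl
      _ = ∫⁻ x, K x s ∂a := by rw [Measure.withDensity_rnDeriv_eq _ _ hac]
  · calc ∫⁻ x, (1 - mixF a a' x) * K' x s ∂(a + a')
        = ∫⁻ x, a'.rnDeriv (a + a') x * K' x s ∂(a + a') := by
          apply lintegral_congr_ae; filter_upwards [hF'] with x hx; rw [hx]
      _ = ∫⁻ x, K' x s ∂((a + a').withDensity (a'.rnDeriv (a + a'))) := by
          rw [lintegral_withDensity_eq_lintegral_mul _ (Measure.measurable_rnDeriv _ _) hg']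
          rfl
      _ = ∫⁻ x, K' x s ∂a' := by rw [Measure.withDensity_rnDeriv_eq _ _ hac']

lemma integrable_coe (m : Measure I) [IsFiniteMeasure m] :
    Integrable (fun y : I => (y : ℝ)) m := by
  refine (integrable_const (1 : ℝ)).mono' continuous_subtype_val.aestronglyMeasurable ?_
  refine ae_of_all _ fun y => ?_
  rw [Real.norm_eq_abs, abs_of_nonneg y.2.1]
  simpa using y.2.2

lemma mix_integral (a a' : Measure I) (K K' : I → Measure I)
    (hK : ∀ x, IsProbabilityMeasure (K x)) (hK' : ∀ x, IsProbabilityMeasure (K' x)) (x : I)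
    (h1 : ∫ y, (y : ℝ) ∂(K x) = (x : ℝ)) (h2 : ∫ y, (y : ℝ) ∂(K' x) = (x : ℝ)) :
    ∫ y, (y : ℝ) ∂(mixK a a' K K' x) = (x : ℝ) := by
  have hle := mixF_le_one a a' x
  have hne : mixF a a' x ≠ ∞ := (lt_of_le_of_lt hle ENNReal.one_lt_top).ne
  have hne' : 1 - mixF a a' x ≠ ∞ := (lt_of_le_of_lt tsub_le_self ENNReal.one_lt_top).ne
  have := hK x; have := hK' x
  rw [mixK, integral_add_measure, integral_smul_measure, integral_smul_measure, h1, h2]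
  · have htr : (mixF a a' x).toReal + (1 - mixF a a' x).toReal = 1 := by
      rw [← ENNReal.toReal_add hne hne', add_tsub_cancel_of_le hle, ENNReal.toReal_one]
    simp only [smul_eq_mul]
    rw [← add_mul, htr, one_mul]
  · exact (integrable_coe (K x)).smul_measure hne
  · exact (integrable_coe (K' x)).smul_measure hne'



/-- Mix two FOSD kernels using RN weights of `a` vs `a + a'`. -/
def FOSDKernel.mix (a a' : Measure I) (φ φ' : FOSDKernel) : FOSDKernel where
  k := mixK a a' φ.k φ'.k
  meas := mixK_meas a a' φ.meas φ'.meas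
  prob x := mixK_prob a a' φ.k φ'.k φ.prob φ'.prob x
  up x := by
    rw [mixK_apply, φ.up x, φ'.up x, mul_one, mul_one]
    exact add_tsub_cancel_of_le (mixF_le_one a a' x)

/-- Mix two probability kernels using RN weights of `a` vs `a + a'`. -/
def ProbKernel.mix (a a' : Measure I) (ρ ρ' : ProbKernel) : ProbKernel where
  k := mixK a a' ρ.k ρ'.k
  meas := mixK_meas a a' ρ.meas ρ'.meas
  prob x := mixK_prob a a' ρ.k ρ'.k ρ.prob ρ'.prob x
  bary_eq x := mix_integral a a' ρ.k ρ'.k ρ.prob ρ'.prob x (ρ.bary_eq x) (ρ'.bary_eq x)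

lemma bind_finite (a : Measure I) [IsFiniteMeasure a] {K : I → Measure I}
    (hK : Measurable K) (hp : ∀ x, IsProbabilityMeasure (K x)) :
    IsFiniteMeasure (a.bind K) := by
  constructor
  rw [Measure.bind_apply MeasurableSet.univ hK.aemeasurable]
  calc ∫⁻ x, K x univ ∂a = ∫⁻ _, 1 ∂a := by
        apply lintegral_congr; intro x; exact (hp x).measure_univ
    _ = a univ := lintegral_one
    _ < ⊤ := measure_lt_top a univ

/-- the domination order is closed under addition of measures supported
on a countable discrete set. -/
theorem domination_additive
    (Γ : Set I) (hc : Γ.Countable) [DiscreteTopology Γ]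
    (ψ ψ' μ μ' : Measure I)
    [IsFiniteMeasure ψ] [IsFiniteMeasure ψ'] [IsFiniteMeasure μ] [IsFiniteMeasure μ']
    (hψ : ψ Γᶜ = 0) (hψ' : ψ' Γᶜ = 0) (hμ : μ Γᶜ = 0) (hμ' : μ' Γᶜ = 0)
    (h1 : DomLE ψ μ) (h2 : DomLE ψ' μ') :
    DomLE (ψ + ψ') (μ + μ') := by
  obtain ⟨φ₁, ρ₁, hle₁⟩ := h1
  obtain ⟨φ₂, ρ₂, hle₂⟩ := h2
  set α : Measure I := ψ.bind φ₁.k with hα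
  set α' : Measure I := ψ'.bind φ₂.k with hα'
  have hαf : IsFiniteMeasure α := bind_finite ψ φ₁.meas φ₁.prob
  have hα'f : IsFiniteMeasure α' := bind_finite ψ' φ₂.meas φ₂.prob
  refine ⟨FOSDKernel.mix ψ ψ' φ₁ φ₂, ProbKernel.mix α α' ρ₁ ρ₂, ?_⟩
  have step1 : (ψ + ψ').bind (FOSDKernel.mix ψ ψ' φ₁ φ₂).k = α + α' :=
    bind_mixK ψ ψ' φ₁.meas φ₂.meas
  rw [step1]
  have step2 : (α + α').bind (ProbKernel.mix α α' ρ₁ ρ₂).k = α.bind ρ₁.k + α'.bind ρ₂.k :=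
    bind_mixK α α' ρ₁.meas ρ₂.meas
  rw [step2]
  exact add_le_add hle₁ hle₂

end Persuasion
end
end
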